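/- arXiv:2005.12079 — 4 statements merged into one kernel-verified Lean document; each statement's English description precedes it below -/
import Mathlib

section
/- For every density matrix ρ on ℂ^{d_A} ⊗ ℂ^{d_B}, every projective measurement Π on Alice's subsystem, every 1 ≤ h ≤ d², and every p ∈ [1,∞), one has M_{h,p}(Π[ρ]) ≤ M_{h,p}(ρ). Consequently the CMN-based discord D^A_{h,p}(ρ) = M_{h,p}(ρ)^p − max_Π M_{h,p}(Π[ρ])^p is nonnegative for every state ρ and all h, p. -/
open Matrix Finset
open scoped Kronecker ComplexOrder

noncomputable section

/-- An orthonormal family of Hermitian matrices with respect to the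
Hilbert–Schmidt inner product `⟨X,Y⟩ = tr (X * Y)`. -/
def IsHSOrthonormal {n m : ℕ} (A : Fin m → Matrix (Fin n) (Fin n) ℂ) : Prop :=
  (∀ i, (A i).IsHermitian) ∧
  ∀ i j, (A i * A j).trace = if i = j then 1 else 0

/-- A density matrix: positive semidefinite with unit trace. -/
def IsDensityMatrix {n : Type*} [Fintype n] [DecidableEq n] (ρ : Matrix n n ℂ) : Prop :=
  ρ.PosSemidef ∧ ρ.trace = 1

/-- The correlation matrix `𝒞_{ij} = tr (ρ (A_i ⊗ B_j))` (a real number since the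
operators involved are Hermitian). -/
def corrMat {dA dB : ℕ} (ρ : Matrix (Fin dA × Fin dB) (Fin dA × Fin dB) ℂ)
    (A : Fin (dA ^ 2) → Matrix (Fin dA) (Fin dA) ℂ)
    (B : Fin (dB ^ 2) → Matrix (Fin dB) (Fin dB) ℂ) :
    Matrix (Fin (dA ^ 2)) (Fin (dB ^ 2)) ℝ :=
  fun i j => (ρ * (A i ⊗ₖ B j)).trace.re

/-- The rectangular "diagonal" matrix with the entries of `σ` on the diagonal. -/
def svdDiag (m n r : ℕ) (σ : Fin r → ℝ) : Matrix (Fin m) (Fin n) ℝ :=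
  fun i j => if h : (i : ℕ) = (j : ℕ) ∧ (i : ℕ) < r then σ ⟨(i : ℕ), h.2⟩ else 0

/-- `σ` is the decreasingly sorted vector of singular values of `C`. -/
def IsSingularValues {m n r : ℕ} (C : Matrix (Fin m) (Fin n) ℝ) (σ : Fin r → ℝ) : Prop :=
  (∀ k, 0 ≤ σ k) ∧ Antitone σ ∧
  ∃ U : Matrix (Fin m) (Fin m) ℝ, ∃ V : Matrix (Fin n) (Fin n) ℝ,
    Uᵀ * U = 1 ∧ Vᵀ * V = 1 ∧ C = U * svdDiag m n r σ * Vᵀ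

/-- A separable bipartite state. -/
def SeparableState {dA dB : ℕ} (ρ : Matrix (Fin dA × Fin dB) (Fin dA × Fin dB) ℂ) : Prop :=
  ∃ (n : ℕ) (w : Fin n → ℝ) (O : Fin n → Matrix (Fin dA) (Fin dA) ℂ)
    (Q : Fin n → Matrix (Fin dB) (Fin dB) ℂ),
    (∀ k, 0 ≤ w k) ∧ (∑ k, w k = 1) ∧
    (∀ k, IsDensityMatrix (O k)) ∧ (∀ k, IsDensityMatrix (Q k)) ∧
    ρ = ∑ k, (w k : ℂ) • (O k ⊗ₖ Q k)

/-- Filter Normal Form: all traceless local observables have vanishing expectation. -/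
def IsFNF {dA dB : ℕ} (ρ : Matrix (Fin dA × Fin dB) (Fin dA × Fin dB) ℂ) : Prop :=
  (∀ A : Matrix (Fin dA) (Fin dA) ℂ, A.IsHermitian → A.trace = 0 →
    (ρ * (A ⊗ₖ (1 : Matrix (Fin dB) (Fin dB) ℂ))).trace = 0) ∧
  (∀ B : Matrix (Fin dB) (Fin dB) ℂ, B.IsHermitian → B.trace = 0 →
    (ρ * ((1 : Matrix (Fin dA) (Fin dA) ℂ) ⊗ₖ B)).trace = 0)

/-- The Correlation Minor Norm with parameters `h`, `p`, expressed in terms of the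
singular values `σ`. -/
def CMN {r : ℕ} (σ : Fin r → ℝ) (h : ℕ) (p : ℝ) : ℝ :=
  (∑ R ∈ Finset.univ.powersetCard h, ∏ k ∈ R, σ k ^ p) ^ (1 / p)

/-- The Correlation Minor Norm with `p = ∞`: the product of the `h` largest singular
values (the singular values being sorted decreasingly). -/
def CMNinf {r : ℕ} (σ : Fin r → ℝ) (h : ℕ) : ℝ :=
  ∏ k ∈ Finset.univ.filter (fun k : Fin r => (k : ℕ) < h), σ k

/-- The `h`-th elementary symmetric polynomial evaluated at `x`. -/
def esym {n : ℕ} (h : ℕ) (x : Fin n → ℝ) : ℝ :=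
  ∑ R ∈ Finset.univ.powersetCard h, ∏ k ∈ R, x k

/-- An orthonormal family of vectors in `ℂ^n`. -/
def IsONFamily {n r : ℕ} (v : Fin r → (Fin n → ℂ)) : Prop :=
  ∀ k l, star (v k) ⬝ᵥ v l = if k = l then 1 else 0

/-- The rank-one projection `|v⟩⟨v|`. -/
def projOf {n : ℕ} (v : Fin n → ℂ) : Matrix (Fin n) (Fin n) ℂ :=
  Matrix.vecMulVec v (star v)

/-- The post-measurement state `Π[ρ] = Σ_l (|l⟩⟨l| ⊗ 𝟙) ρ (|l⟩⟨l| ⊗ 𝟙)` for the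
projective measurement on Alice's side given by the orthonormal basis `e`. -/
def measured {dA dB : ℕ} (ρ : Matrix (Fin dA × Fin dB) (Fin dA × Fin dB) ℂ)
    (e : Fin dA → (Fin dA → ℂ)) : Matrix (Fin dA × Fin dB) (Fin dA × Fin dB) ℂ :=
  ∑ l, (projOf (e l) ⊗ₖ (1 : Matrix (Fin dB) (Fin dB) ℂ)) * ρ *
       (projOf (e l) ⊗ₖ (1 : Matrix (Fin dB) (Fin dB) ℂ))

/-- A regular, coherent, degree-1 quantum design with `r = 1`: a family of rank-one
orthogonal projections summing to `(v/b)·𝟙` whose pairwise overlaps are constant. -/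
def IsQDesign {b v : ℕ} (P : Fin v → Matrix (Fin b) (Fin b) ℂ) : Prop :=
  (∀ k, (P k).IsHermitian) ∧ (∀ k, P k * P k = P k) ∧ (∀ k, (P k).trace = 1) ∧
  (∑ k, P k) = ((v : ℂ) / (b : ℂ)) • 1 ∧
  ∃ μ : ℝ, ∀ k l, k ≠ l → (P k * P l).trace = (μ : ℂ)

/-- A classical-quantum state `χ = Σ_l q_l |l⟩⟨l| ⊗ ρ_l`. -/
def IsCQState {dA dB : ℕ} (χ : Matrix (Fin dA × Fin dB) (Fin dA × Fin dB) ℂ) : Prop :=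
  ∃ e : Fin dA → (Fin dA → ℂ), IsONFamily e ∧
  ∃ (q : Fin dA → ℝ) (τ : Fin dA → Matrix (Fin dB) (Fin dB) ℂ),
    (∀ l, 0 ≤ q l) ∧ (∑ l, q l = 1) ∧ (∀ l, IsDensityMatrix (τ l)) ∧
    χ = ∑ l, (q l : ℂ) • (projOf (e l) ⊗ₖ τ l)

/-- Squared Frobenius norm. -/
def frobSq {n : Type*} [Fintype n] (M : Matrix n n ℂ) : ℝ :=
  ∑ i, ∑ j, Complex.normSq (M i j)

/-- Geometric quantum discord with respect to Alice's subsystem. -/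
def geoDiscord {dA dB : ℕ} (ρ : Matrix (Fin dA × Fin dB) (Fin dA × Fin dB) ℂ) : ℝ :=
  sInf {x : ℝ | ∃ χ, IsCQState χ ∧ x = frobSq (ρ - χ)}

/-- The set of values `M_{h,p}(Π[ρ])^p` over all projective measurements `Π` on
Alice's subsystem. -/
def measuredCMNSet {dA dB : ℕ} (ρ : Matrix (Fin dA × Fin dB) (Fin dA × Fin dB) ℂ)
    (A : Fin (dA ^ 2) → Matrix (Fin dA) (Fin dA) ℂ)
    (B : Fin (dB ^ 2) → Matrix (Fin dB) (Fin dB) ℂ) (h : ℕ) (p : ℝ) : Set ℝ :=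
  {x | ∃ e : Fin dA → (Fin dA → ℂ), IsONFamily e ∧
    ∃ σ' : Fin (min dA dB ^ 2) → ℝ,
      IsSingularValues (corrMat (measured ρ e) A B) σ' ∧ x = CMN σ' h p ^ p}

/-- The vector `Σ_k s_k |φ_k⟩⊗|ξ_k⟩` of a Schmidt decomposition. -/
def pureVec {dA dB r : ℕ} (s : Fin r → ℝ) (φ : Fin r → (Fin dA → ℂ))
    (ξ : Fin r → (Fin dB → ℂ)) : Fin dA × Fin dB → ℂ :=
  fun i => ∑ k, (s k : ℂ) * φ k i.1 * ξ k i.2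

/-!
A projective measurement on Alice's side acts on the correlation matrix by left multiplication,
`𝒞(Π[ρ]) = T 𝒞(ρ)`, where `T` is the matrix, in the Hilbert–Schmidt orthonormal basis `A`, of the
pinching `X ↦ Σ_l P_l X P_l`. The pinching is self-adjoint and idempotent for the Hilbert–Schmidt
inner product, so `T` is an orthogonal projection and in particular a contraction. Hence
`(T𝒞)ᵀ(T𝒞) ≤ 𝒞ᵀ𝒞` as quadratic forms, and a Courant–Fischer dimension count shows that each
singular value of `T𝒞` is at most the corresponding one of `𝒞`. Since `M_{h,p}` is monotone in
every singular value, both claims follow.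
-/

section Pinching

variable {d : ℕ}

lemma projOf_isHermitian (v : Fin d → ℂ) : (projOf v).IsHermitian := by
  simp [IsHermitian, projOf]

lemma IsONFamily.projOf_mul_projOf {e : Fin d → Fin d → ℂ} (he : IsONFamily e) (l k : Fin d) :
    projOf (e l) * projOf (e k) = if l = k then projOf (e l) else 0 := by
  rw [projOf, projOf, vecMulVec_mul_vecMulVec, he l k]
  split_ifs with hlk
  · rw [hlk, one_smul]
  · rw [zero_smul]; ext; simp [vecMulVec_apply]

/-- The measurement in the Heisenberg picture, acting on Alice's observables. -/
def pinch (e : Fin d → Fin d → ℂ) (X : Matrix (Fin d) (Fin d) ℂ) : Matrix (Fin d) (Fin d) ℂ :=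
  ∑ l, projOf (e l) * X * projOf (e l)

lemma Matrix.IsHermitian.pinch (e : Fin d → Fin d → ℂ) {X : Matrix (Fin d) (Fin d) ℂ}
    (hX : X.IsHermitian) : (pinch e X).IsHermitian := by
  refine isSelfAdjoint_sum _ fun l _ => ?_
  have := isHermitian_conjTranspose_mul_mul (projOf (e l)) hX
  rwa [(projOf_isHermitian _).eq] at this

lemma trace_mul_pinch (e : Fin d → Fin d → ℂ) (X Y : Matrix (Fin d) (Fin d) ℂ) :
    (X * pinch e Y).trace = (pinch e X * Y).trace := by
  simp only [pinch, Finset.mul_sum, Finset.sum_mul, trace_sum]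
  refine Finset.sum_congr rfl fun l _ => ?_
  simp only [← mul_assoc]
  rw [trace_mul_comm (X * projOf (e l) * Y)]
  simp only [← mul_assoc]

lemma pinch_sum_smul (e : Fin d → Fin d → ℂ) {ι : Type*} [Fintype ι]
    (c : ι → ℂ) (X : ι → Matrix (Fin d) (Fin d) ℂ) :
    pinch e (∑ t, c t • X t) = ∑ t, c t • pinch e (X t) := by
  simp only [pinch, Finset.mul_sum, Finset.sum_mul, Matrix.mul_smul, Matrix.smul_mul,
    Finset.smul_sum]
  exact Finset.sum_comm

lemma IsONFamily.pinch_pinch {e : Fin d → Fin d → ℂ} (he : IsONFamily e)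
    (X : Matrix (Fin d) (Fin d) ℂ) : pinch e (pinch e X) = pinch e X := by
  refine Finset.sum_congr rfl fun k _ => ?_
  simp only [pinch, Finset.mul_sum, Finset.sum_mul, ← mul_assoc]
  rw [Finset.sum_eq_single k]
  · rw [he.projOf_mul_projOf, if_pos rfl, mul_assoc, he.projOf_mul_projOf, if_pos rfl]
  · intro l _ hlk
    rw [he.projOf_mul_projOf, if_neg (Ne.symm hlk)]
    simp
  · simp

end Pinching

lemma Matrix.sum_kronecker {ι l m n p α : Type*} [NonUnitalNonAssocSemiring α] (s : Finset ι)
    (X : ι → Matrix l m α) (Y : Matrix n p α) :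
    (∑ t ∈ s, X t) ⊗ₖ Y = ∑ t ∈ s, X t ⊗ₖ Y := by
  ext ⟨i, i'⟩ ⟨j, j'⟩
  simp [sum_apply, Finset.sum_mul]

lemma Matrix.IsHermitian.trace_mul_eq_ofReal_re {n : Type*} [Fintype n]
    {X Y : Matrix n n ℂ} (hX : X.IsHermitian) (hY : Y.IsHermitian) :
    (X * Y).trace = ((X * Y).trace.re : ℂ) := by
  refine (Complex.conj_eq_iff_re.1 ?_).symm
  rw [← Complex.star_def, ← trace_conjTranspose, conjTranspose_mul, hX.eq, hY.eq,
    trace_mul_comm]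

namespace IsHSOrthonormal

variable {d : ℕ} {A : Fin (d ^ 2) → Matrix (Fin d) (Fin d) ℂ}

lemma trace_mul_sum_smul (hA : IsHSOrthonormal A) (c : Fin (d ^ 2) → ℂ) (k : Fin (d ^ 2)) :
    (A k * ∑ m, c m • A m).trace = c k := by
  simp [Finset.mul_sum, trace_sum, trace_smul, hA.2]

lemma linearIndependent (hA : IsHSOrthonormal A) : LinearIndependent ℂ A :=
  Fintype.linearIndependent_iff.2 fun c hc k => by
    simpa [hc] using (hA.trace_mul_sum_smul c k).symm

lemma sum_trace_mul_smul (hA : IsHSOrthonormal A) (M : Matrix (Fin d) (Fin d) ℂ) :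
    ∑ m, (A m * M).trace • A m = M := by
  have hspan : Submodule.span ℂ (Set.range A) = ⊤ :=
    hA.linearIndependent.span_eq_top_of_card_eq_finrank' (by simp [Module.finrank_matrix, sq])
  obtain ⟨c, rfl⟩ := (Submodule.mem_span_range_iff_exists_fun ℂ).1
    (hspan ▸ Submodule.mem_top : M ∈ Submodule.span ℂ (Set.range A))
  simp only [hA.trace_mul_sum_smul]

lemma sum_re_trace_mul_smul (hA : IsHSOrthonormal A) {M : Matrix (Fin d) (Fin d) ℂ}
    (hM : M.IsHermitian) : ∑ m, ((A m * M).trace.re : ℂ) • A m = M := by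
  simp only [← ((hA.1 _).trace_mul_eq_ofReal_re hM), hA.sum_trace_mul_smul]

end IsHSOrthonormal

section PinchMatrix

variable {d : ℕ} {A : Fin (d ^ 2) → Matrix (Fin d) (Fin d) ℂ} {e : Fin d → Fin d → ℂ}

def pinchMatrix (A : Fin (d ^ 2) → Matrix (Fin d) (Fin d) ℂ) (e : Fin d → Fin d → ℂ) :
    Matrix (Fin (d ^ 2)) (Fin (d ^ 2)) ℝ :=
  of fun i s => (A s * pinch e (A i)).trace.re

lemma pinch_eq_sum_pinchMatrix_smul (hA : IsHSOrthonormal A) (i : Fin (d ^ 2)) :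
    pinch e (A i) = ∑ s, (pinchMatrix A e i s : ℂ) • A s :=
  (hA.sum_re_trace_mul_smul (Matrix.IsHermitian.pinch e (hA.1 i))).symm

lemma pinchMatrix_transpose : (pinchMatrix A e)ᵀ = pinchMatrix A e := by
  ext i s
  simp only [transpose_apply, pinchMatrix, of_apply]
  rw [trace_mul_pinch, trace_mul_comm]

lemma pinchMatrix_mul_self (hA : IsHSOrthonormal A) (he : IsONFamily e) :
    pinchMatrix A e * pinchMatrix A e = pinchMatrix A e := by
  ext i s
  have hidem : pinch e (A i) = ∑ t, (pinchMatrix A e i t : ℂ) • pinch e (A t) := by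
    conv_lhs => rw [← he.pinch_pinch, pinch_eq_sum_pinchMatrix_smul hA i]
    exact pinch_sum_smul e _ _
  calc (pinchMatrix A e * pinchMatrix A e) i s
      = (A s * ∑ t, (pinchMatrix A e i t : ℂ) • pinch e (A t)).trace.re := by
        simp [mul_apply, Finset.mul_sum, trace_sum, trace_smul, pinchMatrix]
    _ = pinchMatrix A e i s := by rw [← hidem]; rfl

end PinchMatrix

lemma trace_measured_mul_kronecker {dA dB : ℕ}
    (ρ : Matrix (Fin dA × Fin dB) (Fin dA × Fin dB) ℂ) (e : Fin dA → Fin dA → ℂ)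
    (X : Matrix (Fin dA) (Fin dA) ℂ) (Y : Matrix (Fin dB) (Fin dB) ℂ) :
    (measured ρ e * (X ⊗ₖ Y)).trace = (ρ * (pinch e X ⊗ₖ Y)).trace := by
  simp only [measured, pinch, Finset.sum_mul, sum_kronecker, Finset.mul_sum, trace_sum]
  refine Finset.sum_congr rfl fun l _ => ?_
  set Q := projOf (e l) ⊗ₖ (1 : Matrix (Fin dB) (Fin dB) ℂ)
  have hQ : (projOf (e l) * X * projOf (e l)) ⊗ₖ Y = Q * (X ⊗ₖ Y) * Q := by
    rw [← mul_kronecker_mul, ← mul_kronecker_mul, one_mul, mul_one]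
  rw [hQ, trace_mul_comm ρ, mul_assoc (Q * ρ), trace_mul_comm (Q * ρ)]
  simp only [mul_assoc]

lemma corrMat_measured {dA dB : ℕ} {A : Fin (dA ^ 2) → Matrix (Fin dA) (Fin dA) ℂ}
    (hA : IsHSOrthonormal A) (B : Fin (dB ^ 2) → Matrix (Fin dB) (Fin dB) ℂ)
    (ρ : Matrix (Fin dA × Fin dB) (Fin dA × Fin dB) ℂ) (e : Fin dA → Fin dA → ℂ) :
    corrMat (measured ρ e) A B = pinchMatrix A e * corrMat ρ A B := by
  ext i j
  simp [corrMat, mul_apply, trace_measured_mul_kronecker, pinch_eq_sum_pinchMatrix_smul hA,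
    sum_kronecker, smul_kronecker, Finset.mul_sum, trace_sum, trace_smul]

section RealQuadraticForms

variable {m : Type*} [Fintype m]

lemma Matrix.mulVec_dotProduct_mulVec {n : Type*} [Fintype n] (M : Matrix m n ℝ) (x y : n → ℝ) :
    (M *ᵥ x) ⬝ᵥ (M *ᵥ y) = x ⬝ᵥ ((Mᵀ * M) *ᵥ y) := by
  rw [← mulVec_mulVec, dotProduct_mulVec x, vecMul_transpose]

lemma Matrix.mulVec_dotProduct_mulVec_self_of_transpose_mul_self [DecidableEq m]
    {U : Matrix m m ℝ} (hU : Uᵀ * U = 1) (x : m → ℝ) : (U *ᵥ x) ⬝ᵥ (U *ᵥ x) = x ⬝ᵥ x := by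
  rw [mulVec_dotProduct_mulVec, hU, one_mulVec]

lemma Matrix.mulVec_dotProduct_mulVec_self_le {T : Matrix m m ℝ} (hT : Tᵀ = T)
    (hTT : IsIdempotentElem T) (x : m → ℝ) : (T *ᵥ x) ⬝ᵥ (T *ᵥ x) ≤ x ⬝ᵥ x := by
  have hproj : (T *ᵥ x) ⬝ᵥ (T *ᵥ x) = x ⬝ᵥ (T *ᵥ x) := by
    rw [mulVec_dotProduct_mulVec, hT, hTT.eq]
  have hcompl : 0 ≤ (x - T *ᵥ x) ⬝ᵥ (x - T *ᵥ x) :=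
    Finset.sum_nonneg fun _ _ => mul_self_nonneg _
  simp only [sub_dotProduct, dotProduct_sub, dotProduct_comm (T *ᵥ x) x] at hcompl
  linarith

end RealQuadraticForms

section CourantFischer

variable {ι : Type*} [Fintype ι] [LinearOrder ι]

lemma exists_ne_zero_mulVec_eq_zero_of_lt_of_gt {K : Type*} [Field K]
    (W W' : Matrix ι ι K) (k : ι) :
    ∃ x ≠ 0, (∀ j < k, (W *ᵥ x) j = 0) ∧ ∀ j, k < j → (W' *ᵥ x) j = 0 := by
  let M : Matrix {j // j ≠ k} ι K := of fun j => if j.1 < k then W j else W' j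
  have hker : LinearMap.ker M.mulVecLin ≠ ⊥ := LinearMap.ker_ne_bot_of_finrank_lt <| by
    simpa using Fintype.card_subtype_lt (p := (· ≠ k)) (x := k) (by simp)
  obtain ⟨x, hx, hx0⟩ := Submodule.ne_bot_iff _ |>.1 hker
  have hMx (j : ι) (hj : j ≠ k) : (M *ᵥ x) ⟨j, hj⟩ = 0 := congrFun hx ⟨j, hj⟩
  refine ⟨x, hx0, fun j hj => ?_, fun j hj => ?_⟩
  · simpa [M, mulVec, hj] using hMx j hj.ne
  · simpa [M, mulVec, hj.not_gt] using hMx j hj.ne'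

lemma sum_mul_sq_le_of_eq_zero_of_lt {a : ι → ℝ} (ha : Antitone a) {y : ι → ℝ} {k : ι}
    (hy : ∀ j < k, y j = 0) : ∑ j, a j * y j ^ 2 ≤ a k * ∑ j, y j ^ 2 := by
  rw [Finset.mul_sum]
  refine Finset.sum_le_sum fun j _ => ?_
  rcases lt_or_ge j k with hjk | hkj
  · simp [hy j hjk]
  · exact mul_le_mul_of_nonneg_right (ha hkj) (sq_nonneg _)

lemma mul_sum_sq_le_of_eq_zero_of_gt {a : ι → ℝ} (ha : Antitone a) {y : ι → ℝ} {k : ι}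
    (hy : ∀ j, k < j → y j = 0) : a k * ∑ j, y j ^ 2 ≤ ∑ j, a j * y j ^ 2 := by
  rw [Finset.mul_sum]
  refine Finset.sum_le_sum fun j _ => ?_
  rcases lt_or_ge k j with hkj | hjk
  · simp [hy j hkj]
  · exact mul_le_mul_of_nonneg_right (ha hjk) (sq_nonneg _)

/-- Courant–Fischer: on the vector given by `exists_ne_zero_mulVec_eq_zero_of_lt_of_gt`, the
left form is at least `b k * ‖x‖²` and the right one at most `a k * ‖x‖²`. -/
lemma le_of_forall_sum_mul_sq_le {a b : ι → ℝ} (ha : Antitone a) (hb : Antitone b)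
    {W W' : Matrix ι ι ℝ} (hW : Wᵀ * W = 1) (hW' : W'ᵀ * W' = 1)
    (hle : ∀ x, ∑ j, b j * (W' *ᵥ x) j ^ 2 ≤ ∑ j, a j * (W *ᵥ x) j ^ 2) (k : ι) :
    b k ≤ a k := by
  obtain ⟨x, hx0, hWx, hW'x⟩ := exists_ne_zero_mulVec_eq_zero_of_lt_of_gt W W' k
  have hnorm {U : Matrix ι ι ℝ} (hU : Uᵀ * U = 1) :
      ∑ j, (U *ᵥ x) j ^ 2 = x ⬝ᵥ x := by
    simpa [dotProduct, sq] using mulVec_dotProduct_mulVec_self_of_transpose_mul_self hU x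
  have hx : 0 < x ⬝ᵥ x := (Finset.sum_nonneg fun _ _ => mul_self_nonneg _).lt_of_ne
    (Ne.symm <| dotProduct_self_eq_zero.not.2 hx0)
  have := (mul_sum_sq_le_of_eq_zero_of_gt hb hW'x).trans
    ((hle x).trans (sum_mul_sq_le_of_eq_zero_of_lt ha hWx))
  rw [hnorm hW, hnorm hW'] at this
  exact le_of_mul_le_mul_right this hx

end CourantFischer

section SingularValues

variable {m n r : ℕ}

/-- The eigenvalues of `Cᵀ * C` when `C` has singular values `σ`. -/
def paddedSq (n : ℕ) (σ : Fin r → ℝ) : Fin n → ℝ :=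
  fun j => if h : (j : ℕ) < r then σ ⟨j, h⟩ ^ 2 else 0

lemma antitone_paddedSq {σ : Fin r → ℝ} (h0 : ∀ k, 0 ≤ σ k) (hσ : Antitone σ) :
    Antitone (paddedSq n σ) := by
  intro j j' hjj'
  by_cases h' : (j' : ℕ) < r
  · have h : (j : ℕ) < r := lt_of_le_of_lt hjj' h'
    simp only [paddedSq, dif_pos h, dif_pos h']
    exact pow_le_pow_left₀ (h0 _) (hσ hjj') 2
  · simp only [paddedSq, dif_neg h']
    split_ifs <;> positivity

lemma svdDiag_transpose_mul_self (hrm : r ≤ m) (σ : Fin r → ℝ) :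
    (svdDiag m n r σ)ᵀ * svdDiag m n r σ = diagonal (paddedSq n σ) := by
  ext j j'
  simp only [mul_apply, transpose_apply, svdDiag, diagonal_apply, paddedSq]
  split_ifs with hjj' hj
  · subst hjj'
    rw [Finset.sum_eq_single ⟨j, hj.trans_le hrm⟩]
    · simp [hj, sq]
    · intro i _ hi
      have : ¬ ((i : ℕ) = j ∧ (i : ℕ) < r) := fun h => hi (Fin.ext h.1)
      simp [this]
    · simp
  · subst hjj'
    refine Finset.sum_eq_zero fun i _ => ?_
    have : ¬ ((i : ℕ) = j ∧ (i : ℕ) < r) := fun h => hj (h.1 ▸ h.2)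
    simp [this]
  · refine Finset.sum_eq_zero fun i _ => ?_
    by_cases h : (i : ℕ) = j ∧ (i : ℕ) < r
    · have : ¬ ((i : ℕ) = j' ∧ (i : ℕ) < r) := fun h' => hjj' (Fin.ext (h.1.symm.trans h'.1))
      simp [this]
    · simp [h]

lemma IsSingularValues.exists_dotProduct_mulVec_self (hrm : r ≤ m)
    {C : Matrix (Fin m) (Fin n) ℝ} {σ : Fin r → ℝ} (hσ : IsSingularValues C σ) :
    ∃ W : Matrix (Fin n) (Fin n) ℝ, Wᵀ * W = 1 ∧
      ∀ x, (C *ᵥ x) ⬝ᵥ (C *ᵥ x) = ∑ j, paddedSq n σ j * (W *ᵥ x) j ^ 2 := by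
  obtain ⟨-, -, U, V, hU, hV, rfl⟩ := hσ
  refine ⟨Vᵀ, by rw [transpose_transpose, mul_eq_one_comm.1 hV], fun x => ?_⟩
  rw [← mulVec_mulVec, ← mulVec_mulVec, mulVec_dotProduct_mulVec_self_of_transpose_mul_self hU,
    mulVec_dotProduct_mulVec, svdDiag_transpose_mul_self hrm]
  simp only [dotProduct, mulVec_diagonal, sq]
  exact Finset.sum_congr rfl fun j _ => by ring

lemma IsSingularValues.le_of_mul_left (hrm : r ≤ m) (hrn : r ≤ n)
    {C : Matrix (Fin m) (Fin n) ℝ} {T : Matrix (Fin m) (Fin m) ℝ}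
    (hT : ∀ x, (T *ᵥ x) ⬝ᵥ (T *ᵥ x) ≤ x ⬝ᵥ x) {σ σ' : Fin r → ℝ}
    (hσ : IsSingularValues C σ) (hσ' : IsSingularValues (T * C) σ') (k : Fin r) :
    σ' k ≤ σ k := by
  obtain ⟨W, hW, hC⟩ := hσ.exists_dotProduct_mulVec_self hrm
  obtain ⟨W', hW', hTC⟩ := hσ'.exists_dotProduct_mulVec_self hrm
  have hsq := le_of_forall_sum_mul_sq_le (antitone_paddedSq hσ.1 hσ.2.1)
    (antitone_paddedSq hσ'.1 hσ'.2.1) hW hW'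
    (fun x => by rw [← hC, ← hTC, ← mulVec_mulVec]; exact hT _) ⟨k, k.2.trans_le hrn⟩
  simp only [paddedSq, k.2, dif_pos, Fin.eta] at hsq
  exact (pow_le_pow_iff_left₀ (hσ'.1 k) (hσ.1 k) two_ne_zero).1 hsq

end SingularValues

section CorrelationMinorNorm

variable {r : ℕ} {σ σ' : Fin r → ℝ}

lemma CMN_nonneg (h0 : ∀ k, 0 ≤ σ k) (h : ℕ) (p : ℝ) : 0 ≤ CMN σ h p :=
  Real.rpow_nonneg (Finset.sum_nonneg fun _ _ => Finset.prod_nonneg fun k _ =>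
    Real.rpow_nonneg (h0 k) p) _

lemma CMN_mono (h0 : ∀ k, 0 ≤ σ' k) (hle : ∀ k, σ' k ≤ σ k) (h : ℕ) {p : ℝ} (hp : 0 ≤ p) :
    CMN σ' h p ≤ CMN σ h p := by
  have hpow (k : Fin r) : 0 ≤ σ' k ^ p := Real.rpow_nonneg (h0 k) p
  unfold CMN
  gcongr
  · exact Finset.sum_nonneg fun _ _ => Finset.prod_nonneg fun k _ => hpow k
  · exact fun k _ => hpow k
  · exact h0 _
  · exact hle _

end CorrelationMinorNorm

theorem cmn_measurement_monotone_and_discord_nonneg_general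
    (dA dB : ℕ)
    (h : ℕ)
    (p : ℝ) (hp : 1 ≤ p)
    (A : Fin (dA ^ 2) → Matrix (Fin dA) (Fin dA) ℂ)
    (B : Fin (dB ^ 2) → Matrix (Fin dB) (Fin dB) ℂ)
    (hA : IsHSOrthonormal A)
    (ρ : Matrix (Fin dA × Fin dB) (Fin dA × Fin dB) ℂ)
    (σ : Fin (min dA dB ^ 2) → ℝ)
    (hσ : IsSingularValues (corrMat ρ A B) σ) :
    (∀ e : Fin dA → (Fin dA → ℂ), IsONFamily e →
      ∀ σ' : Fin (min dA dB ^ 2) → ℝ,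
        IsSingularValues (corrMat (measured ρ e) A B) σ' →
          CMN σ' h p ≤ CMN σ h p) ∧
    0 ≤ CMN σ h p ^ p - sSup (measuredCMNSet ρ A B h p) := by
  have hp0 : 0 ≤ p := zero_le_one.trans hp
  have hmono (e : Fin dA → Fin dA → ℂ) (he : IsONFamily e) (σ' : Fin (min dA dB ^ 2) → ℝ)
      (hσ' : IsSingularValues (corrMat (measured ρ e) A B) σ') : CMN σ' h p ≤ CMN σ h p := by
    rw [corrMat_measured hA] at hσ'
    have hcontr := mulVec_dotProduct_mulVec_self_le pinchMatrix_transpose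
      (pinchMatrix_mul_self hA he)
    exact CMN_mono hσ'.1 (hσ.le_of_mul_left (Nat.pow_le_pow_left (min_le_left _ _) 2)
      (Nat.pow_le_pow_left (min_le_right _ _) 2) hcontr hσ') h hp0
  refine ⟨hmono, sub_nonneg.2 (Real.sSup_le ?_ (Real.rpow_nonneg (CMN_nonneg hσ.1 h p) p))⟩
  rintro _ ⟨e, he, σ', hσ', rfl⟩
  exact Real.rpow_le_rpow (CMN_nonneg hσ'.1 h p) (hmono e he σ' hσ') hp0

/-- Projective measurements on Alice's side cannot increase the
Correlation Minor Norm: `M_{h,p}(Π[ρ]) ≤ M_{h,p}(ρ)` for every projective measurement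
`Π`; consequently the CMN-based discord
`D^A_{h,p}(ρ) = M_{h,p}(ρ)^p − sup_Π M_{h,p}(Π[ρ])^p` is nonnegative. -/
theorem cmn_measurement_monotone_and_discord_nonneg
    (dA dB : ℕ) (hdA : 0 < dA) (hdB : 0 < dB)
    (h : ℕ) (hh1 : 1 ≤ h) (hh2 : h ≤ min dA dB ^ 2)
    (p : ℝ) (hp : 1 ≤ p)
    (A : Fin (dA ^ 2) → Matrix (Fin dA) (Fin dA) ℂ)
    (B : Fin (dB ^ 2) → Matrix (Fin dB) (Fin dB) ℂ)
    (hA : IsHSOrthonormal A) (hB : IsHSOrthonormal B)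
    (ρ : Matrix (Fin dA × Fin dB) (Fin dA × Fin dB) ℂ) (hρ : IsDensityMatrix ρ)
    (σ : Fin (min dA dB ^ 2) → ℝ)
    (hσ : IsSingularValues (corrMat ρ A B) σ) :
    (∀ e : Fin dA → (Fin dA → ℂ), IsONFamily e →
      ∀ σ' : Fin (min dA dB ^ 2) → ℝ,
        IsSingularValues (corrMat (measured ρ e) A B) σ' →
          CMN σ' h p ≤ CMN σ h p) ∧
    0 ≤ CMN σ h p ^ p - sSup (measuredCMNSet ρ A B h p) :=
  cmn_measurement_monotone_and_discord_nonneg_general dA dB h p hp A B hA ρ σ hσ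

end
end

section
/- Let ρ = |ψ⟩⟨ψ| be a pure state on ℂ^{d_A}⊗ℂ^{d_B} and let t ∈ {1,…,d}, d = min{d_A,d_B}. Then for every p ∈ [1,∞), the Correlation Minor Norm M_{h=t², p}(ρ) is nonzero if and only if the Schmidt rank of |ψ⟩ (the number of nonzero Schmidt coefficients s_k) is at least t. -/
open Matrix Finset
open scoped Kronecker ComplexOrder

noncomputable section

/-!
Let `𝒜` be the matrix whose `i`-th row lists the entries of `A i`, so that it has `d_A²` rows
and `d_A²` columns. Hilbert–Schmidt orthonormality says `𝒜 𝒜ᴴ = 1`, so the square matrix `𝒜` is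
unitary. Over `ℂ` the correlation matrix factors as `𝒞 = 𝒜 R(ρ) 𝓑ᵀ`, where `R(ρ)` is the realignment of `ρ`, so `rank 𝒞 = rank R(ρ)`. For `ρ = |ψ⟩⟨ψ|` the realignment
is `Ψ ⊗ Ψ̄`, where `Ψ = Φ diag(s) Ξᵀ` is the coefficient matrix of `ψ` and `Φ`, `Ξ` are isometries,
so `rank R(ρ) = rank (diag s ⊗ diag s)` is the square of the Schmidt rank. A real SVD of `𝒞`
stays an SVD over `ℂ`, so `rank 𝒞` is also the number of nonzero singular values, and
`M_{h,p}(ρ)` vanishes exactly when fewer than `h` of them are nonzero.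
-/

theorem CMN_ne_zero_iff {r : ℕ} {σ : Fin r → ℝ} (hσ : ∀ k, 0 ≤ σ k) (h : ℕ) {p : ℝ}
    (hp : p ≠ 0) : CMN σ h p ≠ 0 ↔ h ≤ #{k | σ k ≠ 0} := by
  have hterm (R : Finset (Fin r)) : 0 ≤ ∏ k ∈ R, σ k ^ p :=
    prod_nonneg fun k _ => Real.rpow_nonneg (hσ k) p
  have hterm_ne_zero (R : Finset (Fin r)) :
      ∏ k ∈ R, σ k ^ p ≠ 0 ↔ R ⊆ ({k | σ k ≠ 0} : Finset (Fin r)) := by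
    simp only [prod_ne_zero_iff, ne_eq, Real.rpow_eq_zero (hσ _) hp, subset_iff, mem_filter_univ]
  rw [CMN, ne_eq, Real.rpow_eq_zero (sum_nonneg fun R _ => hterm R) (one_div_ne_zero hp),
    sum_eq_zero_iff_of_nonneg fun R _ => hterm R, ← powersetCard_nonempty]
  simp only [not_forall, hterm_ne_zero, exists_prop, Finset.Nonempty, mem_powersetCard,
    subset_univ, true_and]
  exact exists_congr fun _ => and_comm

namespace Matrix

variable {K : Type*} [Field K]

theorem rank_mul_mul_transpose_of_mul_eq_one {l m n o : Type*} [Fintype l] [Fintype m]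
    [Fintype n] [Fintype o] [DecidableEq m] [DecidableEq n] {P : Matrix l m K}
    {P' : Matrix m l K} {Q : Matrix o n K} {Q' : Matrix n o K} (hP : P' * P = 1)
    (hQ : Q' * Q = 1) (M : Matrix m n K) :
    (P * M * Qᵀ).rank = M.rank := by
  refine le_antisymm ((rank_mul_le_left _ _).trans (rank_mul_le_right _ _)) ?_
  have hM : M = P' * (P * M * Qᵀ) * Q'ᵀ := by
    rw [Matrix.mul_assoc, Matrix.mul_assoc, ← transpose_mul, hQ, transpose_one, Matrix.mul_one,
      ← Matrix.mul_assoc, hP, Matrix.one_mul]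
  calc M.rank = (P' * (P * M * Qᵀ) * Q'ᵀ).rank := by rw [← hM]
    _ ≤ (P * M * Qᵀ).rank := (rank_mul_le_left _ _).trans (rank_mul_le_right _ _)

def realign {m n α : Type*} (ρ : Matrix (m × n) (m × n) α) : Matrix (m × m) (n × n) α :=
  of fun x y => ρ (x.1, y.1) (x.2, y.2)

theorem IsHermitian.ofReal_re_trace_mul {n : Type*} [Fintype n] {X Y : Matrix n n ℂ}
    (hX : X.IsHermitian) (hY : Y.IsHermitian) : (((X * Y).trace.re : ℝ) : ℂ) = (X * Y).trace :=
  Complex.conj_eq_iff_re.mp <| by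
    rw [← Complex.star_def, ← trace_conjTranspose, conjTranspose_mul, hX.eq, hY.eq, trace_mul_comm]

theorem realign_vecMulVec_star {m n α : Type*} [Mul α] [Star α] (v : m × n → α) :
    realign (vecMulVec v (star v)) = of (Function.curry v) ⊗ₖ (of (Function.curry v)).map star :=
  rfl

theorem conjTranspose_map_star_mul_map_star {k r : Type*} [Fintype k] [DecidableEq r]
    {W : Matrix k r ℂ} (hW : Wᴴ * W = 1) : (W.map star)ᴴ * W.map star = 1 := by
  have h : (W.map star)ᴴ * W.map star = (Wᴴ * W).map (starRingEnd ℂ) := by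
    rw [Matrix.map_mul]
    rfl
  rw [h, hW, Matrix.map_one _ (map_zero _) (map_one _)]

theorem conjTranspose_kronecker_mul_kronecker {k l r r' : Type*} [Fintype k] [Fintype l]
    [DecidableEq r] [DecidableEq r'] {W : Matrix k r ℂ} {W' : Matrix l r' ℂ}
    (hW : Wᴴ * W = 1) (hW' : W'ᴴ * W' = 1) : (W ⊗ₖ W')ᴴ * (W ⊗ₖ W') = 1 := by
  rw [conjTranspose_kronecker, ← mul_kronecker_mul, hW, hW', one_kronecker_one]

theorem rank_kronecker_map_star {m n r : Type*} [Fintype m] [Fintype n] [Fintype r]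
    [DecidableEq m] [DecidableEq n] [DecidableEq r] {Φ : Matrix m r ℂ} {Ξ : Matrix n r ℂ}
    (hΦ : Φᴴ * Φ = 1) (hΞ : Ξᴴ * Ξ = 1) (d : r → ℂ) :
    ((Φ * diagonal d * Ξᵀ) ⊗ₖ (Φ * diagonal d * Ξᵀ).map star).rank = #{k | d k ≠ 0} ^ 2 := by
  set M := Φ * diagonal d * Ξᵀ
  have hM : M ⊗ₖ M.map star =
      (Φ ⊗ₖ Φ.map star) * diagonal (fun u : r × r => d u.1 * star (d u.2)) *
        (Ξ ⊗ₖ Ξ.map star)ᵀ := by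
    have hMbar : M.map star = Φ.map star * diagonal (star ∘ d) * (Ξ.map star)ᵀ := by
      change M.map (starRingEnd ℂ) = _
      rw [Matrix.map_mul, Matrix.map_mul, diagonal_map (map_zero _), transpose_map]
      rfl
    rw [hMbar, mul_kronecker_mul, mul_kronecker_mul, diagonal_kronecker_diagonal,
      kroneckerMap_transpose]
    rfl
  rw [hM, rank_mul_mul_transpose_of_mul_eq_one
    (conjTranspose_kronecker_mul_kronecker hΦ (conjTranspose_map_star_mul_map_star hΦ))
    (conjTranspose_kronecker_mul_kronecker hΞ (conjTranspose_map_star_mul_map_star hΞ)),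
    rank_diagonal, Fintype.card_subtype, sq, ← card_product, ← filter_product, univ_product_univ]
  simp only [ne_eq, mul_eq_zero, star_eq_zero, not_or]

end Matrix

theorem rank_map_svdDiag {K : Type*} [Field K] (f : ℝ →+* K) {m n r : ℕ} (hm : r ≤ m)
    (hn : r ≤ n) (σ : Fin r → ℝ) :
    ((svdDiag m n r σ).map f).rank = #{k | σ k ≠ 0} := by
  classical
  set P : Matrix (Fin m) (Fin r) K := (1 : Matrix (Fin m) (Fin m) K).submatrix id (Fin.castLE hm)
  set Q : Matrix (Fin n) (Fin r) K := (1 : Matrix (Fin n) (Fin n) K).submatrix id (Fin.castLE hn)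
  have hP : Pᵀ * P = 1 := by
    rw [transpose_submatrix, transpose_one, ← submatrix_mul _ _ _ _ _ Function.bijective_id,
      Matrix.one_mul, submatrix_one _ (Fin.castLE_injective hm)]
  have hQ : Qᵀ * Q = 1 := by
    rw [transpose_submatrix, transpose_one, ← submatrix_mul _ _ _ _ _ Function.bijective_id,
      Matrix.one_mul, submatrix_one _ (Fin.castLE_injective hn)]
  have hfact : (svdDiag m n r σ).map f = P * diagonal (f ∘ σ) * Qᵀ := by
    ext i j
    rw [map_apply, mul_apply]
    simp only [P, Q, svdDiag, mul_diagonal, transpose_apply, submatrix_apply, id, one_apply,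
      Function.comp_apply]
    split_ifs with h
    · rw [Finset.sum_eq_single ⟨i, h.2⟩ (fun k _ hk => by grind [Fin.ext_iff, Fin.val_castLE])
        (by simp)]
      simp [Fin.ext_iff, h.1]
    · refine (map_zero f).trans (Finset.sum_eq_zero fun k _ => ?_).symm
      grind [Fin.ext_iff, Fin.val_castLE]
  rw [hfact, rank_mul_mul_transpose_of_mul_eq_one hP hQ, rank_diagonal, Fintype.card_subtype]
  simp

theorem IsSingularValues.rank_map {K : Type*} [Field K] (f : ℝ →+* K) {m n r : ℕ}
    {C : Matrix (Fin m) (Fin n) ℝ} {σ : Fin r → ℝ} (hσ : IsSingularValues C σ)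
    (hm : r ≤ m) (hn : r ≤ n) :
    (C.map f).rank = #{k | σ k ≠ 0} := by
  obtain ⟨-, -, U, V, hU, hV, rfl⟩ := hσ
  have unitary_map {k : ℕ} {W : Matrix (Fin k) (Fin k) ℝ} (hW : Wᵀ * W = 1) :
      (W.map f)ᵀ * W.map f = 1 := by
    rw [← transpose_map, ← Matrix.map_mul, hW, Matrix.map_one _ f.map_zero f.map_one]
  rw [Matrix.map_mul, Matrix.map_mul, transpose_map, rank_mul_mul_transpose_of_mul_eq_one
    (unitary_map hU) (unitary_map hV), rank_map_svdDiag f hm hn]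

def hsCoeffMatrix {n k : ℕ} (A : Fin k → Matrix (Fin n) (Fin n) ℂ) :
    Matrix (Fin k) (Fin n × Fin n) ℂ :=
  of fun i x => A i x.2 x.1

theorem IsHSOrthonormal.hsCoeffMatrix_mul_conjTranspose {n k : ℕ}
    {A : Fin k → Matrix (Fin n) (Fin n) ℂ} (hA : IsHSOrthonormal A) :
    hsCoeffMatrix A * (hsCoeffMatrix A)ᴴ = 1 := by
  ext i j
  rw [mul_apply, Fintype.sum_prod_type, one_apply, ← hA.2 i j, trace, Finset.sum_comm]
  refine Finset.sum_congr rfl fun a _ => Finset.sum_congr rfl fun b _ => ?_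
  rw [conjTranspose_apply, hsCoeffMatrix, of_apply, of_apply, ← conjTranspose_apply, (hA.1 j).eq]

theorem IsHSOrthonormal.conjTranspose_mul_hsCoeffMatrix {n : ℕ}
    {A : Fin (n ^ 2) → Matrix (Fin n) (Fin n) ℂ} (hA : IsHSOrthonormal A) :
    (hsCoeffMatrix A)ᴴ * hsCoeffMatrix A = 1 :=
  (mul_eq_one_comm_of_equiv ((finCongr (sq n)).trans finProdFinEquiv.symm)).1
    hA.hsCoeffMatrix_mul_conjTranspose

theorem corrMat_map_ofReal {dA dB : ℕ} {ρ : Matrix (Fin dA × Fin dB) (Fin dA × Fin dB) ℂ}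
    (hρ : ρ.IsHermitian) {A : Fin (dA ^ 2) → Matrix (Fin dA) (Fin dA) ℂ}
    {B : Fin (dB ^ 2) → Matrix (Fin dB) (Fin dB) ℂ} (hA : ∀ i, (A i).IsHermitian)
    (hB : ∀ j, (B j).IsHermitian) :
    (corrMat ρ A B).map Complex.ofRealHom = hsCoeffMatrix A * realign ρ * (hsCoeffMatrix B)ᵀ := by
  ext i j
  have hAB : (A i ⊗ₖ B j).IsHermitian := by
    rw [IsHermitian, conjTranspose_kronecker, (hA i).eq, (hB j).eq]
  rw [map_apply, Complex.ofRealHom_eq_coe, corrMat, IsHermitian.ofReal_re_trace_mul hρ hAB]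
  simp only [trace, Matrix.diag, mul_apply, Fintype.sum_prod_type, kroneckerMap_apply,
    hsCoeffMatrix, realign, of_apply, transpose_apply, Finset.sum_mul]
  rw [Finset.sum_comm]
  refine Finset.sum_congr rfl fun b _ => ?_
  conv_rhs => rw [Finset.sum_comm]
  refine Finset.sum_congr rfl fun a _ => ?_
  conv_rhs => rw [Finset.sum_comm]
  exact Finset.sum_congr rfl fun a' _ => Finset.sum_congr rfl fun b' _ => by ring

theorem of_curry_pureVec {dA dB r : ℕ} (s : Fin r → ℝ) (φ : Fin r → (Fin dA → ℂ))
    (ξ : Fin r → (Fin dB → ℂ)) :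
    of (Function.curry (pureVec s φ ξ)) = (of φ)ᵀ * diagonal (fun k => (s k : ℂ)) * (of ξ)ᵀᵀ := by
  ext a b
  rw [mul_apply]
  simp only [pureVec, Function.curry_apply, of_apply, mul_diagonal, transpose_apply]
  exact Finset.sum_congr rfl fun k _ => by ring

theorem IsONFamily.conjTranspose_mul_self {n r : ℕ} {v : Fin r → (Fin n → ℂ)}
    (hv : IsONFamily v) : ((of v)ᵀ)ᴴ * (of v)ᵀ = 1 := by
  ext k l
  rw [one_apply, ← hv k l]
  rfl

theorem rank_realign_pureVec {dA dB r : ℕ} (s : Fin r → ℝ) {φ : Fin r → (Fin dA → ℂ)}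
    {ξ : Fin r → (Fin dB → ℂ)} (hφ : IsONFamily φ) (hξ : IsONFamily ξ) :
    (realign (vecMulVec (pureVec s φ ξ) (star (pureVec s φ ξ)))).rank = #{k | s k ≠ 0} ^ 2 := by
  rw [realign_vecMulVec_star, of_curry_pureVec,
    rank_kronecker_map_star hφ.conjTranspose_mul_self hξ.conjTranspose_mul_self]
  simp only [ne_eq, Complex.ofReal_eq_zero]

theorem pure_state_cmn_nonzero_iff_schmidt_rank_general
    (dA dB : ℕ)
    (t : ℕ)
    (p : ℝ) (hp : 1 ≤ p)
    (s : Fin (min dA dB) → ℝ)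
    (φ : Fin (min dA dB) → (Fin dA → ℂ)) (ξ : Fin (min dA dB) → (Fin dB → ℂ))
    (hφ : IsONFamily φ) (hξ : IsONFamily ξ)
    (A : Fin (dA ^ 2) → Matrix (Fin dA) (Fin dA) ℂ)
    (B : Fin (dB ^ 2) → Matrix (Fin dB) (Fin dB) ℂ)
    (hA : IsHSOrthonormal A) (hB : IsHSOrthonormal B)
    (ρ : Matrix (Fin dA × Fin dB) (Fin dA × Fin dB) ℂ)
    (hρdef : ρ = Matrix.vecMulVec (pureVec s φ ξ) (star (pureVec s φ ξ)))
    (σ : Fin (min dA dB ^ 2) → ℝ)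
    (hσ : IsSingularValues (corrMat ρ A B) σ) :
    CMN σ (t ^ 2) p ≠ 0 ↔ t ≤ (Finset.univ.filter fun k => s k ≠ 0).card := by
  have hρ : ρ.IsHermitian := hρdef ▸ (posSemidef_vecMulVec_self_star _).isHermitian
  have hrank := hσ.rank_map Complex.ofRealHom (Nat.pow_le_pow_left (min_le_left dA dB) 2)
    (Nat.pow_le_pow_left (min_le_right dA dB) 2)
  rw [corrMat_map_ofReal hρ hA.1 hB.1,
    rank_mul_mul_transpose_of_mul_eq_one hA.conjTranspose_mul_hsCoeffMatrix
      hB.conjTranspose_mul_hsCoeffMatrix, hρdef, rank_realign_pureVec s hφ hξ] at hrank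
  rw [CMN_ne_zero_iff hσ.1 _ (by positivity), ← hrank, Nat.pow_le_pow_iff_left two_ne_zero]

/-- For a pure state `ρ = |ψ⟩⟨ψ|` and `t ∈ {1,…,d}`, for every
`p ∈ [1,∞)` the Correlation Minor Norm `M_{t²,p}(ρ)` is nonzero if and only if the
Schmidt rank of `|ψ⟩` (the number of nonzero Schmidt coefficients) is at least `t`. -/
theorem pure_state_cmn_nonzero_iff_schmidt_rank
    (dA dB : ℕ) (hdA : 0 < dA) (hdB : 0 < dB)
    (t : ℕ) (ht1 : 1 ≤ t) (ht2 : t ≤ min dA dB)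
    (p : ℝ) (hp : 1 ≤ p)
    (s : Fin (min dA dB) → ℝ) (hs : ∀ k, 0 ≤ s k) (hnorm : ∑ k, s k ^ 2 = 1)
    (φ : Fin (min dA dB) → (Fin dA → ℂ)) (ξ : Fin (min dA dB) → (Fin dB → ℂ))
    (hφ : IsONFamily φ) (hξ : IsONFamily ξ)
    (A : Fin (dA ^ 2) → Matrix (Fin dA) (Fin dA) ℂ)
    (B : Fin (dB ^ 2) → Matrix (Fin dB) (Fin dB) ℂ)
    (hA : IsHSOrthonormal A) (hB : IsHSOrthonormal B)
    (ρ : Matrix (Fin dA × Fin dB) (Fin dA × Fin dB) ℂ)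
    (hρdef : ρ = Matrix.vecMulVec (pureVec s φ ξ) (star (pureVec s φ ξ)))
    (σ : Fin (min dA dB ^ 2) → ℝ)
    (hσ : IsSingularValues (corrMat ρ A B) σ) :
    CMN σ (t ^ 2) p ≠ 0 ↔ t ≤ (Finset.univ.filter fun k => s k ≠ 0).card :=
  pure_state_cmn_nonzero_iff_schmidt_rank_general dA dB t p hp s φ ξ hφ hξ A B hA hB ρ hρdef σ hσ
end
end

section
/- Let d_A = d_B = 2 and let ρ = |ψ⟩⟨ψ| be a two-qubit pure state with Schmidt coefficients s_1, s_2 (so s_1² + s_2² = 1). Then the determinant of the 4×4 correlation matrix of ρ satisfies |det 𝒞| = s_1⁴ s_2⁴ = [s_1²(1 − s_1²)]². -/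
open Matrix Finset
open scoped Kronecker ComplexOrder

noncomputable section

/-! Conjugating by the unitaries whose columns are the Schmidt vectors preserves the
Hilbert–Schmidt product, and turns `𝒞ᵢⱼ` into `∑ₖₗ sₖ sₗ xₖₗ yₖₗ` with `x = U_φᴴ Aᵢ U_φ`,
`y = U_ξᴴ Bⱼ U_ξ`. In real coordinates with respect to an orthonormal basis of the Hermitian
`2 × 2` matrices this is `𝒞 = O_A · diag (s₀², s₁², s₀s₁, -s₀s₁) · O_Bᵀ` with `O_A`, `O_B`
orthogonal, so `|det 𝒞| = s₀⁴ s₁⁴`. -/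

lemma IsONFamily.transpose_of_mem_unitaryGroup {n : ℕ} {v : Fin n → Fin n → ℂ}
    (hv : IsONFamily v) : (of v)ᵀ ∈ unitaryGroup (Fin n) ℂ := by
  rw [mem_unitaryGroup_iff']
  ext k l
  simpa [mul_apply, dotProduct, one_apply] using hv k l

lemma conjTranspose_transpose_of_mul_mul_apply {m n : Type*} [Fintype n] (v : m → n → ℂ)
    (X : Matrix n n ℂ) (k l : m) :
    ((of v)ᵀᴴ * X * (of v)ᵀ) k l = star (v k) ⬝ᵥ X *ᵥ v l := by
  simp only [mul_apply, conjTranspose_apply, transpose_apply, of_apply, RCLike.star_def,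
    Finset.sum_mul, mul_assoc, dotProduct, Pi.star_apply, mulVec, Finset.mul_sum]
  exact Finset.sum_comm

lemma trace_conj_mul_conj {n α : Type*} [Fintype n] [DecidableEq n] [CommRing α] [StarRing α]
    {U : Matrix n n α} (hU : U ∈ unitaryGroup n α) (X Y : Matrix n n α) :
    (Uᴴ * X * U * (Uᴴ * Y * U)).trace = (X * Y).trace := by
  have hUU : U * Uᴴ = 1 := mem_unitaryGroup_iff.mp hU
  calc (Uᴴ * X * U * (Uᴴ * Y * U)).trace = (Uᴴ * (X * (U * Uᴴ) * Y) * U).trace := by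
        simp only [Matrix.mul_assoc]
    _ = (X * Y).trace := by
        rw [hUU, Matrix.mul_one, trace_mul_comm, ← Matrix.mul_assoc, hUU, Matrix.one_mul]

lemma abs_det_of_mem_orthogonalGroup {n : Type*} [Fintype n] [DecidableEq n] {O : Matrix n n ℝ}
    (hO : O ∈ orthogonalGroup n ℝ) : |O.det| = 1 :=
  Real.norm_eq_abs _ ▸ CStarRing.norm_of_mem_unitary (det_of_mem_unitary hO)

lemma star_dotProduct_kronecker_mulVec {m n R : Type*} [Fintype m] [Fintype n] [CommSemiring R]
    [StarRing R] (u u' : m → R) (v v' : n → R) (X : Matrix m m R) (Y : Matrix n n R) :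
    star (fun i : m × n => u i.1 * v i.2) ⬝ᵥ (X ⊗ₖ Y) *ᵥ (fun i => u' i.1 * v' i.2) =
      (star u ⬝ᵥ X *ᵥ u') * (star v ⬝ᵥ Y *ᵥ v') := by
  simp only [dotProduct, mulVec, Fintype.sum_prod_type, kroneckerMap_apply, Pi.star_apply,
    star_mul']
  rw [Finset.sum_mul_sum]
  simp only [Finset.sum_mul, Finset.mul_sum]
  refine Finset.sum_congr rfl fun a _ => Finset.sum_congr rfl fun b _ =>
    Finset.sum_comm.trans <| Finset.sum_congr rfl fun d _ => Finset.sum_congr rfl fun c _ => by ring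

lemma pureVec_eq_sum {dA dB r : ℕ} (s : Fin r → ℝ) (φ : Fin r → Fin dA → ℂ)
    (ξ : Fin r → Fin dB → ℂ) :
    pureVec s φ ξ = ∑ k, (s k : ℂ) • fun i : Fin dA × Fin dB => φ k i.1 * ξ k i.2 := by
  ext i
  simp [pureVec, mul_assoc]

lemma trace_vecMulVec_pureVec_mul_kronecker {dA dB r : ℕ} (s : Fin r → ℝ)
    (φ : Fin r → Fin dA → ℂ) (ξ : Fin r → Fin dB → ℂ) (X : Matrix (Fin dA) (Fin dA) ℂ)
    (Y : Matrix (Fin dB) (Fin dB) ℂ) :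
    (vecMulVec (pureVec s φ ξ) (star (pureVec s φ ξ)) * (X ⊗ₖ Y)).trace =
      ∑ k, ∑ l, (s k * s l : ℂ) * ((star (φ k) ⬝ᵥ X *ᵥ φ l) * (star (ξ k) ⬝ᵥ Y *ᵥ ξ l)) := by
  rw [vecMulVec_mul, trace_vecMulVec, dotProduct_comm, ← dotProduct_mulVec, pureVec_eq_sum]
  simp only [star_sum, star_smul, Complex.star_def, Complex.conj_ofReal, sum_dotProduct,
    mulVec_sum, dotProduct_sum, smul_dotProduct, mulVec_smul, dotProduct_smul,
    star_dotProduct_kronecker_mulVec, smul_eq_mul, Finset.mul_sum]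
  rw [Finset.sum_comm]
  exact Finset.sum_congr rfl fun k _ => Finset.sum_congr rfl fun l _ => by ring

/-- Coordinates with respect to the Hilbert–Schmidt orthonormal basis `E₀₀, E₁₁,
(E₀₁ + E₁₀)/√2, i(E₀₁ - E₁₀)/√2` of the Hermitian `2 × 2` matrices. -/
def hermCoords (x : Matrix (Fin 2) (Fin 2) ℂ) : Fin 4 → ℝ :=
  ![(x 0 0).re, (x 1 1).re, √2 * (x 0 1).re, √2 * (x 0 1).im]

lemma Matrix.IsHermitian.fin_two_apply {x : Matrix (Fin 2) (Fin 2) ℂ} (hx : x.IsHermitian) :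
    x 1 0 = star (x 0 1) ∧ (x 0 0).im = 0 ∧ (x 1 1).im = 0 :=
  ⟨(hx.apply 1 0).symm, Complex.conj_eq_iff_im.mp (hx.apply 0 0),
    Complex.conj_eq_iff_im.mp (hx.apply 1 1)⟩

lemma re_trace_mul_eq_hermCoords_dotProduct {x y : Matrix (Fin 2) (Fin 2) ℂ}
    (hx : x.IsHermitian) (hy : y.IsHermitian) :
    (x * y).trace.re = hermCoords x ⬝ᵥ hermCoords y := by
  obtain ⟨hx10, hx00, hx11⟩ := hx.fin_two_apply
  obtain ⟨hy10, hy00, hy11⟩ := hy.fin_two_apply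
  simp only [trace_fin_two, mul_apply, Fin.sum_univ_two, hx10, hy10, hermCoords, dotProduct,
    Fin.sum_univ_four, RCLike.star_def, Complex.add_re, Complex.mul_re, hx00, hy00, hx11, hy11,
    Complex.conj_re, Complex.conj_im, cons_val_zero, cons_val_one, Matrix.cons_val]
  linear_combination (-((x 0 1).re * (y 0 1).re + (x 0 1).im * (y 0 1).im)) *
    Real.mul_self_sqrt (zero_le_two (α := ℝ))

/-- The sign of the last weight comes from `x₀₁ y₀₁ + x₁₀ y₁₀ = 2 (Re x₀₁ Re y₀₁ - Im x₀₁ Im y₀₁)`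
for Hermitian `x`, `y`. -/
def schmidtWeights (s : Fin 2 → ℝ) : Fin 4 → ℝ :=
  ![s 0 ^ 2, s 1 ^ 2, s 0 * s 1, -(s 0 * s 1)]

lemma re_schmidt_sum_eq_hermCoords_dotProduct {x y : Matrix (Fin 2) (Fin 2) ℂ}
    (hx : x.IsHermitian) (hy : y.IsHermitian) (s : Fin 2 → ℝ) :
    (∑ k, ∑ l, (s k * s l : ℂ) * (x k l * y k l)).re =
      hermCoords x ⬝ᵥ (schmidtWeights s * hermCoords y) := by
  obtain ⟨hx10, hx00, hx11⟩ := hx.fin_two_apply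
  obtain ⟨hy10, hy00, hy11⟩ := hy.fin_two_apply
  simp only [Fin.sum_univ_two, hx10, hy10, hermCoords, schmidtWeights, dotProduct,
    Fin.sum_univ_four, RCLike.star_def, Complex.add_re, Complex.mul_re, Complex.mul_im,
    Complex.ofReal_re, Complex.ofReal_im, hx00, hy00, hx11, hy11, Complex.conj_re,
    Complex.conj_im, Pi.mul_apply, cons_val_zero, cons_val_one, Matrix.cons_val]
  linear_combination (-(s 0 * s 1 * ((x 0 1).re * (y 0 1).re - (x 0 1).im * (y 0 1).im))) *
    Real.mul_self_sqrt (zero_le_two (α := ℝ))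

def hermCoordMatrix (U : Matrix (Fin 2) (Fin 2) ℂ) (F : Fin 4 → Matrix (Fin 2) (Fin 2) ℂ) :
    Matrix (Fin 4) (Fin 4) ℝ :=
  of fun i => hermCoords (Uᴴ * F i * U)

lemma hermCoordMatrix_mem_orthogonalGroup {U : Matrix (Fin 2) (Fin 2) ℂ}
    (hU : U ∈ unitaryGroup (Fin 2) ℂ) {F : Fin 4 → Matrix (Fin 2) (Fin 2) ℂ}
    (hF : IsHSOrthonormal F) : hermCoordMatrix U F ∈ orthogonalGroup (Fin 4) ℝ := by
  rw [mem_orthogonalGroup_iff]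
  ext i j
  have hherm (k) : (Uᴴ * F k * U).IsHermitian := isHermitian_conjTranspose_mul_mul U (hF.1 k)
  calc (hermCoordMatrix U F * (hermCoordMatrix U F)ᵀ) i j
      = (Uᴴ * F i * U * (Uᴴ * F j * U)).trace.re :=
        (re_trace_mul_eq_hermCoords_dotProduct (hherm i) (hherm j)).symm
    _ = (1 : Matrix (Fin 4) (Fin 4) ℝ) i j := by
        rw [trace_conj_mul_conj hU, hF.2, one_apply]
        split_ifs <;> simp

lemma corrMat_vecMulVec_pureVec {s : Fin 2 → ℝ} {φ ξ : Fin 2 → Fin 2 → ℂ}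
    {A B : Fin 4 → Matrix (Fin 2) (Fin 2) ℂ} (hA : ∀ i, (A i).IsHermitian)
    (hB : ∀ j, (B j).IsHermitian) :
    corrMat (vecMulVec (pureVec s φ ξ) (star (pureVec s φ ξ))) A B =
      hermCoordMatrix (of φ)ᵀ A * diagonal (schmidtWeights s) *
        (hermCoordMatrix (of ξ)ᵀ B)ᵀ := by
  ext i j
  rw [corrMat, trace_vecMulVec_pureVec_mul_kronecker]
  simp only [← conjTranspose_transpose_of_mul_mul_apply]
  rw [re_schmidt_sum_eq_hermCoords_dotProduct (isHermitian_conjTranspose_mul_mul _ (hA i))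
    (isHermitian_conjTranspose_mul_mul _ (hB j)), mul_apply]
  simp only [hermCoordMatrix, mul_diagonal, transpose_apply, of_apply, dotProduct, Pi.mul_apply,
    ← mul_assoc]

lemma det_diagonal_schmidtWeights (s : Fin 2 → ℝ) :
    (diagonal (schmidtWeights s)).det = -(s 0 ^ 4 * s 1 ^ 4) := by
  simp only [det_diagonal, Fin.prod_univ_four, schmidtWeights, cons_val_zero, cons_val_one,
    Matrix.cons_val]
  ring

theorem two_qubit_pure_state_det_corr_general
    (s : Fin 2 → ℝ) (hnorm : s 0 ^ 2 + s 1 ^ 2 = 1)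
    (φ : Fin 2 → (Fin 2 → ℂ)) (ξ : Fin 2 → (Fin 2 → ℂ))
    (hφ : IsONFamily φ) (hξ : IsONFamily ξ)
    (A : Fin (2 ^ 2) → Matrix (Fin 2) (Fin 2) ℂ)
    (B : Fin (2 ^ 2) → Matrix (Fin 2) (Fin 2) ℂ)
    (hA : IsHSOrthonormal A) (hB : IsHSOrthonormal B)
    (ρ : Matrix (Fin 2 × Fin 2) (Fin 2 × Fin 2) ℂ)
    (hρdef : ρ = Matrix.vecMulVec (pureVec s φ ξ) (star (pureVec s φ ξ))) :
    |(corrMat ρ A B).det| = s 0 ^ 4 * s 1 ^ 4 ∧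
    s 0 ^ 4 * s 1 ^ 4 = (s 0 ^ 2 * (1 - s 0 ^ 2)) ^ 2 := by
  refine ⟨?_, by rw [← hnorm]; ring⟩
  have hOA := hermCoordMatrix_mem_orthogonalGroup hφ.transpose_of_mem_unitaryGroup hA
  have hOB := hermCoordMatrix_mem_orthogonalGroup hξ.transpose_of_mem_unitaryGroup hB
  rw [hρdef, corrMat_vecMulVec_pureVec hA.1 hB.1, det_mul, det_mul, det_transpose, abs_mul,
    abs_mul, abs_det_of_mem_orthogonalGroup hOA, abs_det_of_mem_orthogonalGroup hOB,
    det_diagonal_schmidtWeights, abs_neg, abs_of_nonneg (by positivity), one_mul, mul_one]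

/-- For a two-qubit pure state with Schmidt coefficients `s₁, s₂`
(`s₁² + s₂² = 1`), the determinant of the 4×4 correlation matrix satisfies
`|det 𝒞| = s₁⁴ s₂⁴ = [s₁²(1 − s₁²)]²`. -/
theorem two_qubit_pure_state_det_corr
    (s : Fin 2 → ℝ) (hs : ∀ k, 0 ≤ s k) (hnorm : s 0 ^ 2 + s 1 ^ 2 = 1)
    (φ : Fin 2 → (Fin 2 → ℂ)) (ξ : Fin 2 → (Fin 2 → ℂ))
    (hφ : IsONFamily φ) (hξ : IsONFamily ξ)
    (A : Fin (2 ^ 2) → Matrix (Fin 2) (Fin 2) ℂ)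
    (B : Fin (2 ^ 2) → Matrix (Fin 2) (Fin 2) ℂ)
    (hA : IsHSOrthonormal A) (hB : IsHSOrthonormal B)
    (ρ : Matrix (Fin 2 × Fin 2) (Fin 2 × Fin 2) ℂ)
    (hρdef : ρ = Matrix.vecMulVec (pureVec s φ ξ) (star (pureVec s φ ξ))) :
    |(corrMat ρ A B).det| = s 0 ^ 4 * s 1 ^ 4 ∧
    s 0 ^ 4 * s 1 ^ 4 = (s 0 ^ 2 * (1 - s 0 ^ 2)) ^ 2 :=
  two_qubit_pure_state_det_corr_general s hnorm φ ξ hφ hξ A B hA hB ρ hρdef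

end
end

section
/- For every separable state ρ on ℂ^{d_A} ⊗ ℂ^{d_B} in Filter Normal Form, the sum of all singular values of its correlation matrix satisfies M_{1,1}(ρ) = Σ_k σ_k(𝒞) ≤ (1 + √( (D−1)(d−1) )) / √(Dd), where D = max{d_A,d_B}, d = min{d_A,d_B}. -/
open Matrix Finset
open scoped Kronecker ComplexOrder

noncomputable section

/-!
Write `ρ = Σₖ wₖ Oₖ ⊗ Qₖ` and expand every factor in the two orthonormal bases, so that
`𝒞 = Σₖ wₖ aₖ bₖᵀ` with `aₖ = (tr (Oₖ Aᵢ))ᵢ` and `bₖ = (tr (Qₖ Bⱼ))ⱼ`. The singular value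
decomposition gives `Σ σₖ = ⟨𝒞, W⟩` for a contraction `W`. Filter normal form forces the
averages `Σₖ wₖ Oₖ` and `Σₖ wₖ Qₖ` to be maximally mixed, so after splitting
`Oₖ = 𝟙/d_A + (Oₖ - 𝟙/d_A)` (and likewise `Qₖ`) the cross terms of `⟨𝒞, W⟩` average out. What
remains is bounded by Bessel's inequality and purity `tr Oₖ² ≤ 1`:
`⟨𝒞, W⟩ ≤ 1/√(d_A d_B) + √((1 - 1/d_A)(1 - 1/d_B))`.
-/

section OrthogonalMatrices

variable {R m n : Type*} [CommRing R] [Fintype m] [Fintype n]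

theorem sum_sq_vecMul_of_mul_transpose_eq_one [DecidableEq m] {U : Matrix m m R}
    (hU : U * Uᵀ = 1) (x : m → R) : ∑ i, (x ᵥ* U) i ^ 2 = ∑ i, x i ^ 2 := by
  have key : (x ᵥ* U) ⬝ᵥ (x ᵥ* U) = x ⬝ᵥ x := by
    rw [← dotProduct_mulVec, ← vecMul_transpose, vecMul_vecMul, hU, vecMul_one]
  simpa only [dotProduct, sq] using key

theorem sum_sum_mul_eq_trace_transpose_mul (M N : Matrix m n R) :
    ∑ i, ∑ j, M i j * N i j = (Mᵀ * N).trace := by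
  simp only [trace, Matrix.diag, mul_apply, transpose_apply]
  exact Finset.sum_comm

theorem sum_sum_orthogonal_conj_mul [DecidableEq m] [DecidableEq n] {U : Matrix m m R}
    {V : Matrix n n R} (hU : Uᵀ * U = 1) (hV : Vᵀ * V = 1) (M N : Matrix m n R) :
    ∑ i, ∑ j, (U * M * Vᵀ) i j * (U * N * Vᵀ) i j = ∑ i, ∑ j, M i j * N i j := by
  have hconj : (U * M * Vᵀ)ᵀ * (U * N * Vᵀ) = V * (Mᵀ * N) * Vᵀ := by
    simp only [transpose_mul, transpose_transpose, Matrix.mul_assoc]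
    rw [← Matrix.mul_assoc Uᵀ, hU, Matrix.one_mul]
  rw [sum_sum_mul_eq_trace_transpose_mul, sum_sum_mul_eq_trace_transpose_mul, hconj,
    trace_mul_cycle, hV, Matrix.one_mul]

end OrthogonalMatrices

section SingularValues

variable {m n r : ℕ}

theorem svdDiag_mulVec_castLE (hm : r ≤ m) (hn : r ≤ n) (σ : Fin r → ℝ) (y : Fin n → ℝ)
    (k : Fin r) : (svdDiag m n r σ *ᵥ y) (Fin.castLE hm k) = σ k * y (Fin.castLE hn k) := by
  rw [mulVec, dotProduct, Finset.sum_eq_single (Fin.castLE hn k)]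
  · simp [svdDiag]
  · intro j _ hj
    have : (k : ℕ) ≠ j := fun h => hj (Fin.ext h.symm)
    simp [svdDiag, this]
  · simp

theorem svdDiag_mulVec_of_le (σ : Fin r → ℝ) (y : Fin n → ℝ) {i : Fin m} (hi : r ≤ i) :
    (svdDiag m n r σ *ᵥ y) i = 0 := by
  simp [mulVec, dotProduct, svdDiag, not_lt.2 hi]

theorem dotProduct_svdDiag_mulVec (hm : r ≤ m) (hn : r ≤ n) (σ : Fin r → ℝ)
    (x : Fin m → ℝ) (y : Fin n → ℝ) :
    x ⬝ᵥ svdDiag m n r σ *ᵥ y = ∑ k, x (Fin.castLE hm k) * σ k * y (Fin.castLE hn k) := by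
  rw [dotProduct, ← Finset.sum_subset (Finset.subset_univ (univ.map (Fin.castLEEmb hm)))]
  · simp [Finset.sum_map, svdDiag_mulVec_castLE hm hn, mul_assoc]
  · intro i _ hi
    have : r ≤ (i : ℕ) := not_lt.1 fun h => hi (Finset.mem_map.2 ⟨⟨i, h⟩, mem_univ _, rfl⟩)
    rw [svdDiag_mulVec_of_le σ y this, mul_zero]

theorem sum_sq_comp_castLE_le (h : r ≤ m) (x : Fin m → ℝ) :
    ∑ k, x (Fin.castLE h k) ^ 2 ≤ ∑ i, x i ^ 2 := by
  calc ∑ k, x (Fin.castLE h k) ^ 2 = ∑ i ∈ univ.map (Fin.castLEEmb h), x i ^ 2 := by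
        rw [Finset.sum_map]; rfl
    _ ≤ ∑ i, x i ^ 2 :=
        Finset.sum_le_sum_of_subset_of_nonneg (subset_univ _) fun i _ _ => sq_nonneg _

theorem svdDiag_mul_svdDiag_one_apply (σ : Fin r → ℝ) (i : Fin m) (j : Fin n) :
    svdDiag m n r σ i j * svdDiag m n r 1 i j = svdDiag m n r σ i j := by
  unfold svdDiag
  split_ifs <;> simp

theorem dotProduct_orthogonal_conj_svdDiag_one_mulVec_le (hm : r ≤ m) (hn : r ≤ n)
    {U : Matrix (Fin m) (Fin m) ℝ} {V : Matrix (Fin n) (Fin n) ℝ}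
    (hU : Uᵀ * U = 1) (hV : Vᵀ * V = 1) (x : Fin m → ℝ) (y : Fin n → ℝ) :
    x ⬝ᵥ (U * svdDiag m n r 1 * Vᵀ) *ᵥ y ≤ √(∑ i, x i ^ 2) * √(∑ j, y j ^ 2) := by
  set p := x ᵥ* U
  set q := y ᵥ* V
  have hp : ∑ i, p i ^ 2 = ∑ i, x i ^ 2 :=
    sum_sq_vecMul_of_mul_transpose_eq_one (mul_eq_one_comm.mp hU) x
  have hq : ∑ j, q j ^ 2 = ∑ j, y j ^ 2 :=
    sum_sq_vecMul_of_mul_transpose_eq_one (mul_eq_one_comm.mp hV) y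
  calc x ⬝ᵥ (U * svdDiag m n r 1 * Vᵀ) *ᵥ y = p ⬝ᵥ svdDiag m n r 1 *ᵥ q := by
        rw [← mulVec_mulVec, ← mulVec_mulVec, dotProduct_mulVec, mulVec_transpose]
    _ = ∑ k, p (Fin.castLE hm k) * q (Fin.castLE hn k) := by
        simp [dotProduct_svdDiag_mulVec hm hn]
    _ ≤ √(∑ k, p (Fin.castLE hm k) ^ 2) * √(∑ k, q (Fin.castLE hn k) ^ 2) :=
        Real.sum_mul_le_sqrt_mul_sqrt _ _ _
    _ ≤ √(∑ i, x i ^ 2) * √(∑ j, y j ^ 2) := by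
        rw [← hp, ← hq]
        gcongr
        exacts [sum_sq_comp_castLE_le hm p, sum_sq_comp_castLE_le hn q]

theorem IsSingularValues.exists_contraction_sum_eq {C : Matrix (Fin m) (Fin n) ℝ}
    {σ : Fin r → ℝ} (hσ : IsSingularValues C σ) (hm : r ≤ m) (hn : r ≤ n) :
    ∃ W : Matrix (Fin m) (Fin n) ℝ, ∑ k, σ k = ∑ i, ∑ j, C i j * W i j ∧
      ∀ x y, x ⬝ᵥ W *ᵥ y ≤ √(∑ i, x i ^ 2) * √(∑ j, y j ^ 2) := by
  obtain ⟨-, -, U, V, hU, hV, rfl⟩ := hσ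
  refine ⟨U * svdDiag m n r 1 * Vᵀ, ?_,
    dotProduct_orthogonal_conj_svdDiag_one_mulVec_le hm hn hU hV⟩
  rw [sum_sum_orthogonal_conj_mul hU hV]
  simp only [svdDiag_mul_svdDiag_one_apply]
  simpa [dotProduct, mulVec] using (dotProduct_svdDiag_mulVec hm hn σ 1 1).symm

end SingularValues

theorem sum_sum_sum_mul_mul_mul_eq_sum_mul_dotProduct_mulVec {R ι m n : Type*} [CommSemiring R]
    [Fintype ι] [Fintype m] [Fintype n] (w : ι → R) (a : ι → m → R) (b : ι → n → R)
    (W : Matrix m n R) :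
    ∑ i, ∑ j, (∑ k, w k * a k i * b k j) * W i j = ∑ k, w k * (a k ⬝ᵥ W *ᵥ b k) := by
  simp only [dotProduct, mulVec, Finset.sum_mul, Finset.mul_sum]
  conv_rhs => rw [Finset.sum_comm]
  refine Finset.sum_congr rfl fun i _ => ?_
  rw [Finset.sum_comm]
  exact Finset.sum_congr rfl fun j _ => Finset.sum_congr rfl fun k _ => by ring

theorem LinearMap.sum_mul_apply_add_add_of_sum_smul_eq_zero {R M N ι : Type*} [CommRing R]
    [AddCommGroup M] [Module R M] [AddCommGroup N] [Module R N] [Fintype ι]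
    (B : M →ₗ[R] N →ₗ[R] R) {w : ι → R} (hw : ∑ k, w k = 1) (u : M) (v : N)
    {c : ι → M} {e : ι → N} (hc : ∑ k, w k • c k = 0) (he : ∑ k, w k • e k = 0) :
    ∑ k, w k * B (u + c k) (v + e k) = B u v + ∑ k, w k * B (c k) (e k) := by
  have hue : ∑ k, w k * B u (e k) = 0 := by
    simp_rw [← smul_eq_mul, ← map_smul, ← map_sum, he, map_zero]
  have hcv : ∑ k, w k * B (c k) v = 0 := by
    simpa [map_sum, LinearMap.sum_apply] using congrArg (fun x => B x v) hc
  simp only [map_add, LinearMap.add_apply, mul_add, Finset.sum_add_distrib, hue, hcv,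
    ← Finset.sum_mul, hw]
  ring

theorem sum_mul_dotProduct_mulVec_add_add_le {m n : ℕ} {ι : Type*} [Fintype ι]
    {W : Matrix (Fin m) (Fin n) ℝ}
    (hW : ∀ x y, x ⬝ᵥ W *ᵥ y ≤ √(∑ i, x i ^ 2) * √(∑ j, y j ^ 2))
    {w : ι → ℝ} (hw0 : ∀ k, 0 ≤ w k) (hw1 : ∑ k, w k = 1)
    {u : Fin m → ℝ} {v : Fin n → ℝ} {c : ι → Fin m → ℝ} {e : ι → Fin n → ℝ}
    (hc : ∑ k, w k • c k = 0) (he : ∑ k, w k • e k = 0) {α β γ δ : ℝ}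
    (hu : ∑ i, u i ^ 2 ≤ α) (hv : ∑ j, v j ^ 2 ≤ β)
    (hck : ∀ k, ∑ i, c k i ^ 2 ≤ γ) (hek : ∀ k, ∑ j, e k j ^ 2 ≤ δ) :
    ∑ k, w k * ((u + c k) ⬝ᵥ W *ᵥ (v + e k)) ≤ √α * √β + √γ * √δ := by
  have hbound : ∀ {a b : ℝ} x y, ∑ i, x i ^ 2 ≤ a → ∑ j, y j ^ 2 ≤ b →
      x ⬝ᵥ W *ᵥ y ≤ √a * √b := fun x y hx hy =>
    (hW x y).trans (by gcongr)
  simp only [← toLinearMap₂'_apply']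
  rw [LinearMap.sum_mul_apply_add_add_of_sum_smul_eq_zero _ hw1 u v hc he]
  simp only [toLinearMap₂'_apply']
  refine add_le_add (hbound u v hu hv) ?_
  calc ∑ k, w k * (c k ⬝ᵥ W *ᵥ e k) ≤ ∑ k, w k * (√γ * √δ) :=
        Finset.sum_le_sum fun k _ =>
          mul_le_mul_of_nonneg_left (hbound _ _ (hck k) (hek k)) (hw0 k)
    _ = √γ * √δ := by rw [← Finset.sum_mul, hw1, one_mul]

section Quantum

variable {d m : ℕ}

-- For Hermitian `X` the traces are real (`Matrix.IsHermitian.ofReal_re_trace_mul`), so `re` loses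
-- nothing.
def hsCoord (A : Fin m → Matrix (Fin d) (Fin d) ℂ) :
    Matrix (Fin d) (Fin d) ℂ →ₗ[ℝ] Fin m → ℝ where
  toFun X i := ((X * A i).trace).re
  map_add' X Y := by ext i; simp [Matrix.add_mul]
  map_smul' c X := by ext i; simp [trace_smul]

theorem hsCoord_apply (A : Fin m → Matrix (Fin d) (Fin d) ℂ) (X : Matrix (Fin d) (Fin d) ℂ)
    (i : Fin m) : hsCoord A X i = ((X * A i).trace).re := rfl

def maxMixed (d : ℕ) : Matrix (Fin d) (Fin d) ℂ := ((d : ℝ)⁻¹) • 1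

theorem isHermitian_maxMixed (d : ℕ) : (maxMixed d).IsHermitian :=
  isHermitian_one.smul (IsSelfAdjoint.all _)

theorem maxMixed_mul (X : Matrix (Fin d) (Fin d) ℂ) : maxMixed d * X = ((d : ℝ)⁻¹) • X := by
  rw [maxMixed, Matrix.smul_mul, Matrix.one_mul]

theorem re_trace_maxMixed_mul_self (d : ℕ) :
    ((maxMixed d * maxMixed d).trace).re = (d : ℝ)⁻¹ := by
  rcases eq_or_ne d 0 with rfl | hd
  · simp [maxMixed]
  · simp [maxMixed, trace_smul]
    field_simp

theorem Matrix.IsHermitian.ofReal_re_trace_mul_s13 {n : Type*} [Fintype n] {X Y : Matrix n n ℂ}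
    (hX : X.IsHermitian) (hY : Y.IsHermitian) : (((X * Y).trace).re : ℂ) = (X * Y).trace := by
  rw [← Complex.conj_eq_iff_re, ← Complex.star_def, ← trace_conjTranspose, conjTranspose_mul,
    hX.eq, hY.eq, trace_mul_comm]

theorem IsHSOrthonormal.hsCoord_self {A : Fin m → Matrix (Fin d) (Fin d) ℂ}
    (hA : IsHSOrthonormal A) (i : Fin m) : hsCoord A (A i) = Pi.single i 1 := by
  ext j
  simp [hsCoord_apply, hA.2, Pi.single_apply, eq_comm, apply_ite Complex.re]

theorem IsHSOrthonormal.sum_sq_hsCoord_le {A : Fin m → Matrix (Fin d) (Fin d) ℂ}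
    (hA : IsHSOrthonormal A) {X : Matrix (Fin d) (Fin d) ℂ} (hX : X.IsHermitian) :
    ∑ i, hsCoord A X i ^ 2 ≤ ((X * X).trace).re := by
  set c := hsCoord A X
  set Z := ∑ i, c i • A i
  have hZ : Z.IsHermitian := (isSelfAdjoint_sum _ fun i _ =>
    ((hA.1 i).smul (IsSelfAdjoint.all (c i))).isSelfAdjoint).isHermitian
  have hcZ : hsCoord A Z = c := by
    simp only [Z, map_sum, map_smul, hA.hsCoord_self]
    exact (pi_eq_sum_univ' c).symm
  have hre : ∀ Y : Matrix (Fin d) (Fin d) ℂ, ((Y * Z).trace).re = hsCoord A Y ⬝ᵥ c := by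
    intro Y
    simp [Z, Matrix.mul_sum, trace_sum, trace_smul, dotProduct, hsCoord_apply, mul_comm]
  have hnonneg : 0 ≤ (((X - Z) * (X - Z)).trace).re := by
    have := (posSemidef_conjTranspose_mul_self (X - Z)).trace_nonneg
    rw [(hX.sub hZ).eq] at this
    exact Complex.nonneg_iff.1 this |>.1
  have hZX : ((Z * X).trace).re = ((X * Z).trace).re := by rw [trace_mul_comm]
  simp only [Matrix.sub_mul, Matrix.mul_sub, trace_sub, Complex.sub_re, hZX, hre, hcZ,
    dotProduct] at hnonneg
  simp only [sq]
  linarith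

theorem IsDensityMatrix.re_trace_mul_self_le_one {n : Type*} [Fintype n] [DecidableEq n]
    {O : Matrix n n ℂ} (hO : IsDensityMatrix O) : ((O * O).trace).re ≤ 1 := by
  have hH : O.IsHermitian := hO.1.isHermitian
  have hsum : ∑ i, hH.eigenvalues i = 1 := by
    have := hH.trace_eq_sum_eigenvalues
    rw [hO.2] at this
    apply Complex.ofReal_injective
    push_cast
    exact this.symm
  have hsq : (O * O).trace = ∑ i, ((hH.eigenvalues i ^ 2 : ℝ) : ℂ) := by
    conv_lhs => rw [hH.spectral_theorem]
    rw [← map_mul, Unitary.conjStarAlgAut_apply, trace_mul_cycle, Unitary.coe_star_mul_self,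
      Matrix.one_mul, diagonal_mul_diagonal, trace_diagonal]
    simp [sq]
  rw [hsq, ← Complex.ofReal_sum, Complex.ofReal_re]
  calc ∑ i, hH.eigenvalues i ^ 2 ≤ (∑ i, hH.eigenvalues i) ^ 2 :=
        Finset.sum_sq_le_sq_sum_of_nonneg fun i _ => hO.1.eigenvalues_nonneg i
    _ = 1 := by rw [hsum, one_pow]

theorem IsDensityMatrix.re_trace_sub_maxMixed_mul_self {O : Matrix (Fin d) (Fin d) ℂ}
    (hO : IsDensityMatrix O) :
    (((O - maxMixed d) * (O - maxMixed d)).trace).re = ((O * O).trace).re - (d : ℝ)⁻¹ := by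
  have hOM : ((O * maxMixed d).trace).re = (d : ℝ)⁻¹ := by
    simp [trace_mul_comm O, maxMixed_mul, trace_smul, hO.2]
  have hMO : ((maxMixed d * O).trace).re = (d : ℝ)⁻¹ := by
    simp [maxMixed_mul, trace_smul, hO.2]
  simp only [Matrix.sub_mul, Matrix.mul_sub, trace_sub, Complex.sub_re, hOM, hMO,
    re_trace_maxMixed_mul_self]
  ring

theorem IsHSOrthonormal.sum_sq_hsCoord_maxMixed_le {A : Fin m → Matrix (Fin d) (Fin d) ℂ}
    (hA : IsHSOrthonormal A) : ∑ i, hsCoord A (maxMixed d) i ^ 2 ≤ (d : ℝ)⁻¹ :=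
  (hA.sum_sq_hsCoord_le (isHermitian_maxMixed d)).trans_eq (re_trace_maxMixed_mul_self d)

theorem IsHSOrthonormal.sum_sq_hsCoord_sub_maxMixed_le {A : Fin m → Matrix (Fin d) (Fin d) ℂ}
    (hA : IsHSOrthonormal A) {O : Matrix (Fin d) (Fin d) ℂ} (hO : IsDensityMatrix O) :
    ∑ i, hsCoord A (O - maxMixed d) i ^ 2 ≤ 1 - (d : ℝ)⁻¹ := by
  have := hA.sum_sq_hsCoord_le (hO.1.isHermitian.sub (isHermitian_maxMixed d))
  rw [hO.re_trace_sub_maxMixed_mul_self] at this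
  linarith [hO.re_trace_mul_self_le_one]

theorem eq_maxMixed_of_forall_trace_mul_eq_zero {X : Matrix (Fin d) (Fin d) ℂ}
    (hX : X.IsHermitian) (htr : X.trace = 1)
    (h : ∀ A : Matrix (Fin d) (Fin d) ℂ, A.IsHermitian → A.trace = 0 → (X * A).trace = 0) :
    X = maxMixed d := by
  -- `Y = X - 𝟙/d` is itself a traceless Hermitian test matrix, and `tr Y² = tr (X Y) = 0`.
  have hd : (d : ℂ) ≠ 0 := by
    rintro hd
    obtain rfl : d = 0 := by exact_mod_cast hd
    simp [Matrix.trace] at htr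
  set Y := X - maxMixed d
  have hY : Y.IsHermitian := hX.sub (isHermitian_maxMixed d)
  have hYtr : Y.trace = 0 := by
    simp [Y, maxMixed, trace_smul, htr, hd]
  have hYY : (Yᴴ * Y).trace = 0 := by
    rw [hY.eq]
    calc (Y * Y).trace = (X * Y).trace - ((d : ℝ)⁻¹ • Y).trace := by
          rw [← maxMixed_mul, ← trace_sub, ← Matrix.sub_mul]
      _ = 0 := by rw [h Y hY hYtr, trace_smul, hYtr, smul_zero, sub_zero]
  exact sub_eq_zero.1 (trace_conjTranspose_mul_self_eq_zero_iff.1 hYY)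

end Quantum

section SeparableStates

variable {dA dB : ℕ} {ι : Type*} [Fintype ι]

theorem trace_sum_smul_kronecker_mul_kronecker {R l n : Type*} [CommRing R] [Fintype l]
    [Fintype n] (w : ι → R) (O : ι → Matrix l l R) (Q : ι → Matrix n n R)
    (X : Matrix l l R) (Y : Matrix n n R) :
    ((∑ k, w k • (O k ⊗ₖ Q k)) * (X ⊗ₖ Y)).trace =
      ∑ k, w k * ((O k * X).trace * (Q k * Y).trace) := by
  simp only [Matrix.sum_mul, trace_sum, Matrix.smul_mul, trace_smul, ← mul_kronecker_mul,
    trace_kronecker, smul_eq_mul]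

theorem corrMat_sum_smul_kronecker {A : Fin (dA ^ 2) → Matrix (Fin dA) (Fin dA) ℂ}
    {B : Fin (dB ^ 2) → Matrix (Fin dB) (Fin dB) ℂ} (hA : ∀ i, (A i).IsHermitian)
    (hB : ∀ j, (B j).IsHermitian) (w : ι → ℝ) {O : ι → Matrix (Fin dA) (Fin dA) ℂ}
    {Q : ι → Matrix (Fin dB) (Fin dB) ℂ} (hO : ∀ k, (O k).IsHermitian)
    (hQ : ∀ k, (Q k).IsHermitian) (i : Fin (dA ^ 2)) (j : Fin (dB ^ 2)) :
    corrMat (∑ k, (w k : ℂ) • (O k ⊗ₖ Q k)) A B i j =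
      ∑ k, w k * hsCoord A (O k) i * hsCoord B (Q k) j := by
  rw [corrMat, trace_sum_smul_kronecker_mul_kronecker, Complex.re_sum]
  refine Finset.sum_congr rfl fun k _ => ?_
  rw [hsCoord_apply, hsCoord_apply, ← (hO k).ofReal_re_trace_mul_s13 (hA i),
    ← (hQ k).ofReal_re_trace_mul_s13 (hB j)]
  norm_cast
  ring

theorem IsFNF.sum_smul_left_eq_maxMixed {ρ : Matrix (Fin dA × Fin dB) (Fin dA × Fin dB) ℂ}
    (hfnf : IsFNF ρ) {w : ι → ℝ} (hw : ∑ k, w k = 1) {O : ι → Matrix (Fin dA) (Fin dA) ℂ}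
    {Q : ι → Matrix (Fin dB) (Fin dB) ℂ} (hO : ∀ k, IsDensityMatrix (O k))
    (hQ : ∀ k, (Q k).trace = 1) (hρ : ρ = ∑ k, (w k : ℂ) • (O k ⊗ₖ Q k)) :
    ∑ k, w k • O k = maxMixed dA := by
  subst hρ
  refine eq_maxMixed_of_forall_trace_mul_eq_zero ?_ ?_ fun X hX hX0 => ?_
  · exact (isSelfAdjoint_sum _ fun k _ =>
      ((hO k).1.isHermitian.smul (IsSelfAdjoint.all (w k))).isSelfAdjoint).isHermitian
  · simp [trace_sum, trace_smul, (hO _).2, ← Complex.ofReal_sum, hw]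
  · have := hfnf.1 X hX hX0
    rw [trace_sum_smul_kronecker_mul_kronecker] at this
    simpa [hQ, Matrix.sum_mul, trace_sum, trace_smul] using this

theorem IsFNF.sum_smul_right_eq_maxMixed {ρ : Matrix (Fin dA × Fin dB) (Fin dA × Fin dB) ℂ}
    (hfnf : IsFNF ρ) {w : ι → ℝ} (hw : ∑ k, w k = 1) {O : ι → Matrix (Fin dA) (Fin dA) ℂ}
    {Q : ι → Matrix (Fin dB) (Fin dB) ℂ} (hO : ∀ k, (O k).trace = 1)
    (hQ : ∀ k, IsDensityMatrix (Q k)) (hρ : ρ = ∑ k, (w k : ℂ) • (O k ⊗ₖ Q k)) :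
    ∑ k, w k • Q k = maxMixed dB := by
  subst hρ
  refine eq_maxMixed_of_forall_trace_mul_eq_zero ?_ ?_ fun Y hY hY0 => ?_
  · exact (isSelfAdjoint_sum _ fun k _ =>
      ((hQ k).1.isHermitian.smul (IsSelfAdjoint.all (w k))).isSelfAdjoint).isHermitian
  · simp [trace_sum, trace_smul, (hQ _).2, ← Complex.ofReal_sum, hw]
  · have := hfnf.2 Y hY hY0
    rw [trace_sum_smul_kronecker_mul_kronecker] at this
    simpa [hO, Matrix.sum_mul, trace_sum, trace_smul] using this

end SeparableStates

theorem sqrt_inv_mul_sqrt_inv_add_sqrt_one_sub_inv_mul {a b : ℝ} (ha : 1 ≤ a) (hb : 1 ≤ b) :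
    √a⁻¹ * √b⁻¹ + √(1 - a⁻¹) * √(1 - b⁻¹) = (1 + √((a - 1) * (b - 1))) / √(a * b) := by
  have ha0 : 0 < a := by linarith
  have hb0 : 0 < b := by linarith
  have hprod : (1 - a⁻¹) * (1 - b⁻¹) = (a - 1) * (b - 1) / (a * b) := by field_simp
  have ha1 : 0 ≤ 1 - a⁻¹ := sub_nonneg.2 (inv_le_one_of_one_le₀ ha)
  rw [← Real.sqrt_mul (inv_nonneg.2 ha0.le), ← Real.sqrt_mul ha1, hprod,
    Real.sqrt_div' _ (by positivity), ← mul_inv, Real.sqrt_inv, add_div, one_div]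

theorem trace_norm_bound_of_separable_FNF_general
    (dA dB : ℕ) (hdA : 0 < dA) (hdB : 0 < dB)
    (A : Fin (dA ^ 2) → Matrix (Fin dA) (Fin dA) ℂ)
    (B : Fin (dB ^ 2) → Matrix (Fin dB) (Fin dB) ℂ)
    (hA : IsHSOrthonormal A) (hB : IsHSOrthonormal B)
    (ρ : Matrix (Fin dA × Fin dB) (Fin dA × Fin dB) ℂ)
    (hsep : SeparableState ρ) (hfnf : IsFNF ρ)
    (σ : Fin (min dA dB ^ 2) → ℝ)
    (hσ : IsSingularValues (corrMat ρ A B) σ) :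
    ∑ k, σ k ≤
      (1 + Real.sqrt (((max dA dB : ℝ) - 1) * ((min dA dB : ℝ) - 1))) /
        Real.sqrt ((max dA dB : ℝ) * (min dA dB : ℝ)) := by
  obtain ⟨N, w, O, Q, hw0, hw1, hO, hQ, hρ⟩ := hsep
  obtain ⟨W, hσW, hW⟩ := hσ.exists_contraction_sum_eq
    (Nat.pow_le_pow_left (min_le_left dA dB) 2) (Nat.pow_le_pow_left (min_le_right dA dB) 2)
  have hc : ∑ k, w k • hsCoord A (O k - maxMixed dA) = 0 := by
    simp only [← map_smul, ← map_sum, smul_sub, Finset.sum_sub_distrib, ← Finset.sum_smul, hw1,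
      one_smul, hfnf.sum_smul_left_eq_maxMixed hw1 hO (fun k => (hQ k).2) hρ, sub_self, map_zero]
  have he : ∑ k, w k • hsCoord B (Q k - maxMixed dB) = 0 := by
    simp only [← map_smul, ← map_sum, smul_sub, Finset.sum_sub_distrib, ← Finset.sum_smul, hw1,
      one_smul, hfnf.sum_smul_right_eq_maxMixed hw1 (fun k => (hO k).2) hQ hρ, sub_self, map_zero]
  have hCW : ∑ i, ∑ j, corrMat ρ A B i j * W i j = ∑ k, w k *
      ((hsCoord A (maxMixed dA) + hsCoord A (O k - maxMixed dA)) ⬝ᵥ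
        W *ᵥ (hsCoord B (maxMixed dB) + hsCoord B (Q k - maxMixed dB))) := by
    simp only [← map_add, add_sub_cancel, hρ, corrMat_sum_smul_kronecker hA.1 hB.1 w
      (fun k => (hO k).1.isHermitian) (fun k => (hQ k).1.isHermitian)]
    exact sum_sum_sum_mul_mul_mul_eq_sum_mul_dotProduct_mulVec _ _ _ _
  rw [hσW, hCW, ← max_sub_sub_right, ← min_sub_sub_right, max_mul_min,
    max_mul_min, ← sqrt_inv_mul_sqrt_inv_add_sqrt_one_sub_inv_mul (by exact_mod_cast hdA)
      (by exact_mod_cast hdB)]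
  exact sum_mul_dotProduct_mulVec_add_add_le hW hw0 hw1 hc he hA.sum_sq_hsCoord_maxMixed_le
    hB.sum_sq_hsCoord_maxMixed_le (fun k => hA.sum_sq_hsCoord_sub_maxMixed_le (hO k))
    (fun k => hB.sum_sq_hsCoord_sub_maxMixed_le (hQ k))

/-- (CM criterion.) For every separable state in Filter Normal Form,
the sum of all singular values of the correlation matrix satisfies
`M_{1,1}(ρ) = Σ_k σ_k ≤ (1 + √((D−1)(d−1)))/√(Dd)`. -/
theorem trace_norm_bound_of_separable_FNF
    (dA dB : ℕ) (hdA : 0 < dA) (hdB : 0 < dB)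
    (A : Fin (dA ^ 2) → Matrix (Fin dA) (Fin dA) ℂ)
    (B : Fin (dB ^ 2) → Matrix (Fin dB) (Fin dB) ℂ)
    (hA : IsHSOrthonormal A) (hB : IsHSOrthonormal B)
    (ρ : Matrix (Fin dA × Fin dB) (Fin dA × Fin dB) ℂ)
    (hρ : IsDensityMatrix ρ) (hsep : SeparableState ρ) (hfnf : IsFNF ρ)
    (σ : Fin (min dA dB ^ 2) → ℝ)
    (hσ : IsSingularValues (corrMat ρ A B) σ) :
    ∑ k, σ k ≤
      (1 + Real.sqrt (((max dA dB : ℝ) - 1) * ((min dA dB : ℝ) - 1))) /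
        Real.sqrt ((max dA dB : ℝ) * (min dA dB : ℝ)) :=
  trace_norm_bound_of_separable_FNF_general dA dB hdA hdB A B hA hB ρ hsep hfnf σ hσ
end
end
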